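/- arXiv:2305.19605 — 4 statements merged into one kernel-verified Lean document; each statement's English description precedes it below -/
import Mathlib

section
/- Assume additionally that f is L-Lipschitz for some L > 0 (so every subgradient used satisfies ‖g_t‖ ≤ L), fix an integer T ≥ 1, and let Free AdaGrad be run with the constant sequence h_t = L·√T. Then, with D_{γ₀} = max(‖x₁ − x*‖, γ₀): Σ_{t=1}^T (f(x_t) − f(x*)) ≤ 12.3 · D_{γ₀} · L · √( T · log₂(2·D_{γ₀}/γ₀) ). -/
open scoped RealInnerProductSpace

open Finset Real

/-!
Each step is a projected subgradient step with step size `γ_{k_t} / h`, so the regret splits into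
`Σ h / (2 γ_{k_t}) · (‖x_t - x*‖² - ‖x_{t+1} - x*‖²)` plus the drift `Σ γ_{k_t} ‖g_t‖² / (2h)`.
Since `‖x_t - x*‖² ≤ ‖x₁ - x*‖² + Γ_t²`, a level `j` can only be rejected while
`γ_j < ‖x₁ - x*‖ √j`; hence the final level `K = k_T` satisfies `γ_K ≤ 2 D √K` and
`K ≤ 2 log₂ (2D / γ₀)`, where `D = max(‖x₁ - x*‖, γ₀)`. Summing the first part by parts, the
weights `h / (2 γ_{k_t})` change only at the times where `k` increases, and there the acceptance
test bounds `‖x_{t+1} - x*‖` from below by `‖x₁ - x*‖ - B_{t+1}(k_t)`. The levels at these switch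
times are distinct, so `Σ 1 / √k_t ≤ 2 √K`, and `Γ_{t+1}² / γ_{k_t}²` is dominated by a geometric
series in `4^{-(k_t - k_s)}`; altogether the regret is at most `7 D L √(T K)`.
-/

theorem sum_mul_sub_sq_add_le {c d M : ℕ → ℝ} {D : ℝ} (hc : ∀ t, 1 ≤ t → c (t + 1) ≤ c t)
    (hd : d 1 = D) (hlow : ∀ t, 1 ≤ t → D ^ 2 - 2 * D * M t ≤ d (t + 1) ^ 2) {n : ℕ}
    (hn : 1 ≤ n) :
    ∑ t ∈ Icc 1 n, c t * (d t ^ 2 - d (t + 1) ^ 2) + c n * d (n + 1) ^ 2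
      ≤ c n * D ^ 2 + 2 * D * ∑ t ∈ Ico 1 n, (c t - c (t + 1)) * M t := by
  induction n, hn using Nat.le_induction with
  | base => simp only [Icc_self, sum_singleton, Ico_self, sum_empty, hd]; linarith
  | succ n hn ih =>
    rw [sum_Icc_succ_top (by omega), sum_Ico_succ_top hn]
    nlinarith [mul_le_mul_of_nonneg_left (hlow n hn) (sub_nonneg.2 (hc n hn))]

theorem sum_mul_sub_sq_le {c d M : ℕ → ℝ} {D : ℝ} (hc : ∀ t, 1 ≤ t → c (t + 1) ≤ c t)
    (hd : d 1 = D) (hlow : ∀ t, 1 ≤ t → D ^ 2 - 2 * D * M t ≤ d (t + 1) ^ 2) {T : ℕ}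
    (hT : 1 ≤ T) (hcT : 0 ≤ c T) :
    ∑ t ∈ Icc 1 T, c t * (d t ^ 2 - d (t + 1) ^ 2)
      ≤ 2 * D * (∑ t ∈ Ico 1 T, (c t - c (t + 1)) * M t + c T * M T) := by
  nlinarith [sum_mul_sub_sq_add_le hc hd hlow hT, mul_le_mul_of_nonneg_left (hlow T hT) hcT]

def switchTimes (k : ℕ → ℕ) (T : ℕ) : Finset ℕ :=
  insert T {t ∈ Ico 1 T | k t < k (t + 1)}

theorem switchTimes_subset {k : ℕ → ℕ} {T : ℕ} (hT : 1 ≤ T) : switchTimes k T ⊆ Icc 1 T := by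
  intro t ht
  simp only [switchTimes, mem_insert, mem_filter, mem_Ico] at ht
  simp only [mem_Icc]
  omega

theorem strictMonoOn_switchTimes {k : ℕ → ℕ} (hk : Monotone k) (T : ℕ) :
    StrictMonoOn k (switchTimes k T) := by
  intro s hs t ht hst
  simp only [switchTimes, coe_insert, coe_filter, mem_Ico, Set.mem_insert_iff,
    Set.mem_ofPred_eq] at hs ht
  rcases hs with rfl | ⟨⟨-, hsT⟩, hswitch⟩
  · omega
  · exact hswitch.trans_le (hk hst)

theorem sum_sub_mul_add_le_sum_switchTimes {φ : ℕ → ℝ} {k : ℕ → ℕ} {M : ℕ → ℝ}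
    (hφ : ∀ j, 0 ≤ φ j) (hk : Monotone k) (hM : ∀ t, 1 ≤ t → 0 ≤ M t) (T : ℕ) :
    ∑ t ∈ Ico 1 T, (φ (k t) - φ (k (t + 1))) * M t + φ (k T) * M T
      ≤ ∑ t ∈ switchTimes k T, φ (k t) * M t := by
  rw [switchTimes, sum_insert (by simp), add_comm, sum_filter]
  gcongr with t ht
  have ht1 := (mem_Ico.1 ht).1
  split_ifs with hswitch
  · nlinarith [mul_nonneg (hφ (k (t + 1))) (hM t ht1)]
  · rw [show k (t + 1) = k t by have := hk (Nat.le_add_right t 1); omega, sub_self, zero_mul]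

theorem sum_pow_le_of_injOn {ι : Type*} {S : Finset ι} {e : ι → ℕ} (he : Set.InjOn e S)
    {r : ℝ} (hr0 : 0 ≤ r) (hr1 : r < 1) : ∑ i ∈ S, r ^ e i ≤ (1 - r)⁻¹ := by
  rw [← sum_image he, ← tsum_geometric_of_lt_one hr0 hr1]
  exact (summable_geometric_of_lt_one hr0 hr1).sum_le_tsum _ fun n _ => pow_nonneg hr0 n

theorem sum_Icc_inv_sqrt_le (K : ℕ) : ∑ j ∈ Icc 1 K, (√j)⁻¹ ≤ 2 * √K := by
  induction K with
  | zero => simp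
  | succ n ih =>
    rw [sum_Icc_succ_top (by omega)]
    have hpos : 0 < √(n + 1 : ℝ) := sqrt_pos.2 (by positivity)
    have hamgm : 2 * (√n * √(n + 1 : ℝ)) ≤ 2 * n + 1 := by
      nlinarith [sq_nonneg (√n - √(n + 1 : ℝ)), sq_sqrt (Nat.cast_nonneg (α := ℝ) n),
        sq_sqrt (by positivity : (0 : ℝ) ≤ n + 1)]
    have hstep : (√(n + 1 : ℝ))⁻¹ ≤ 2 * √(n + 1 : ℝ) - 2 * √n := by
      rw [inv_le_iff_one_le_mul₀ hpos]
      nlinarith [mul_self_sqrt (by positivity : (0 : ℝ) ≤ n + 1)]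
    push_cast
    linarith

theorem sum_inv_sqrt_le {A : Finset ℕ} {K : ℕ} (hA : A ⊆ Icc 1 K) :
    ∑ j ∈ A, (√j)⁻¹ ≤ 2 * √K :=
  (sum_le_sum_of_subset_of_nonneg hA fun _ _ _ => by positivity).trans (sum_Icc_inv_sqrt_le K)

theorem natCast_le_two_mul_logb_of_two_pow_le {K : ℕ} {R : ℝ} (h : (2 : ℝ) ^ K ≤ R * √K) :
    (K : ℝ) ≤ 2 * logb 2 R := by
  have hK : (K : ℝ) ≤ 2 ^ K := by exact_mod_cast (Nat.lt_two_pow_self).le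
  have hR : 0 < R := pos_of_mul_pos_left ((pow_pos two_pos K).trans_le h) (sqrt_nonneg _)
  have hsq : (2 : ℝ) ^ K * 2 ^ K ≤ R ^ 2 * 2 ^ K := by
    calc (2 : ℝ) ^ K * 2 ^ K ≤ (R * √K) ^ 2 := by
          rw [← sq]; exact pow_le_pow_left₀ (by positivity) h 2
      _ = R ^ 2 * K := by rw [mul_pow, sq_sqrt K.cast_nonneg]
      _ ≤ R ^ 2 * 2 ^ K := by gcongr
  rw [show 2 * logb 2 R = logb 2 (R ^ 2) by rw [logb_pow]; push_cast; ring,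
    le_logb_iff_rpow_le one_lt_two (by positivity), rpow_natCast]
  exact le_of_mul_le_mul_right hsq (by positivity)

section FreeAdaGrad

variable {E : Type*} [NormedAddCommGroup E] [InnerProductSpace ℝ E]

theorem norm_le_of_subgradient_of_lipschitz {f : E → ℝ} {x g : E} {L : ℝ} (hL : 0 ≤ L)
    (hg : ∀ y, f x + ⟪g, y - x⟫ ≤ f y) (hLip : ∀ y z, |f y - f z| ≤ L * ‖y - z‖) : ‖g‖ ≤ L := by
  have hgrad := hg (x + g)
  have hlip := (le_abs_self _).trans (hLip (x + g) x)
  simp only [add_sub_cancel_left, real_inner_self_eq_norm_sq] at hgrad hlip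
  by_contra! hLg
  nlinarith [norm_nonneg g]

theorem norm_sub_le_norm_sub_of_nearest {Θ : Set E} (hΘ : Convex ℝ Θ) {p z y : E} (hp : p ∈ Θ)
    (hmin : ∀ w ∈ Θ, ‖z - p‖ ≤ ‖z - w‖) (hy : y ∈ Θ) : ‖p - y‖ ≤ ‖z - y‖ := by
  have : Nonempty Θ := ⟨⟨p, hp⟩⟩
  have hinf : ‖z - p‖ = ⨅ w : Θ, ‖z - w‖ :=
    le_antisymm (le_ciInf fun w => hmin w w.2)
      (ciInf_le (f := fun w : Θ => ‖z - w‖) ⟨0, by rintro _ ⟨w, rfl⟩; positivity⟩ ⟨p, hp⟩)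
  have hobtuse := (norm_eq_iInf_iff_real_inner_le_zero hΘ hp).1 hinf y hy
  have hexpand : ‖z - y‖ ^ 2 = ‖z - p‖ ^ 2 - 2 * ⟪z - p, y - p⟫ + ‖p - y‖ ^ 2 := by
    rw [norm_sub_rev p y, ← norm_sub_sq_real, sub_sub_sub_cancel_right]
  exact (pow_le_pow_iff_left₀ (norm_nonneg _) (norm_nonneg _) two_ne_zero).1
    (by nlinarith [sq_nonneg ‖z - p‖])

theorem sq_norm_proj_step_sub_le {Θ : Set E} (hΘ : Convex ℝ Θ) {proj : E → E}
    (hprojΘ : ∀ z, proj z ∈ Θ) (hproj : ∀ z, ∀ y ∈ Θ, ‖z - proj z‖ ≤ ‖z - y‖)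
    {f : E → ℝ} {x g y : E} (hg : ∀ y, f x + ⟪g, y - x⟫ ≤ f y) (hy : y ∈ Θ) {η : ℝ}
    (hη : 0 ≤ η) :
    ‖proj (x - η • g) - y‖ ^ 2 ≤ ‖x - y‖ ^ 2 - 2 * η * (f x - f y) + η ^ 2 * ‖g‖ ^ 2 := by
  have hproj_le := norm_sub_le_norm_sub_of_nearest hΘ (hprojΘ (x - η • g)) (hproj _) hy
  have hexpand : ‖x - η • g - y‖ ^ 2 = ‖x - y‖ ^ 2 - 2 * η * ⟪g, x - y⟫ + η ^ 2 * ‖g‖ ^ 2 := by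
    rw [show x - η • g - y = (x - y) - η • g by abel, norm_sub_sq_real, real_inner_smul_right,
      norm_smul, mul_pow, Real.norm_eq_abs, sq_abs, real_inner_comm]
    ring
  have hsub : f x - f y ≤ ⟪g, x - y⟫ := by
    have := hg y
    rw [← neg_sub x y, inner_neg_right] at this
    linarith
  nlinarith [pow_le_pow_left₀ (norm_nonneg _) hproj_le 2]

/-- A run of Free AdaGrad with the constant sequence `h_t = H`, indexed from `t = 1`:
`Γsq t` is `Γ_t²`, `xplus t j` is `x_t⁺(j)` and `B t j` is `B_{t+1}(j)`. -/
structure IsFreeAdaGradRun (Θ : Set E) (proj : E → E) (f : E → ℝ) (γ₀ : ℝ) (γ : ℕ → ℝ) (H : ℝ)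
    (x g : ℕ → E) (k : ℕ → ℕ) (Γsq : ℕ → ℝ) (xplus : ℕ → ℕ → E) (B : ℕ → ℕ → ℝ) : Prop where
  convex : Convex ℝ Θ
  proj_mem : ∀ z, proj z ∈ Θ
  norm_sub_proj_le : ∀ z, ∀ y ∈ Θ, ‖z - proj z‖ ≤ ‖z - y‖
  γ₀_pos : 0 < γ₀
  γ_eq : ∀ j, γ j = γ₀ * 2 ^ j
  H_pos : 0 < H
  x_one_mem : x 1 ∈ Θ
  subgradient : ∀ t, 1 ≤ t → ∀ y, f (x t) + ⟪g t, y - x t⟫ ≤ f y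
  k_zero : k 0 = 1
  Γsq_one : Γsq 1 = 0
  xplus_eq : ∀ t j, 1 ≤ t → xplus t j = proj (x t - (γ j / H) • g t)
  B_eq : ∀ t j, 1 ≤ t → B t j = 2 * γ j / √j + √(Γsq t + γ j ^ 2 * ‖g t‖ ^ 2 / H ^ 2)
  k_pred_le : ∀ t, 1 ≤ t → k (t - 1) ≤ k t
  accept : ∀ t, 1 ≤ t → ‖xplus t (k t) - x 1‖ ≤ B t (k t)
  reject : ∀ t, 1 ≤ t → ∀ j, k (t - 1) ≤ j → j < k t → B t j < ‖xplus t j - x 1‖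
  x_succ : ∀ t, 1 ≤ t → x (t + 1) = xplus t (k t)
  Γsq_succ : ∀ t, 1 ≤ t → Γsq (t + 1) = Γsq t + γ (k t) ^ 2 * ‖g t‖ ^ 2 / H ^ 2

namespace IsFreeAdaGradRun

variable {Θ : Set E} {proj : E → E} {f : E → ℝ} {γ₀ : ℝ} {γ : ℕ → ℝ} {H : ℝ} {x g : ℕ → E}
  {k : ℕ → ℕ} {Γsq : ℕ → ℝ} {xplus : ℕ → ℕ → E} {B : ℕ → ℕ → ℝ} {xstar : E} {t j : ℕ}

theorem monotone_k (run : IsFreeAdaGradRun Θ proj f γ₀ γ H x g k Γsq xplus B) : Monotone k :=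
  monotone_nat_of_le_succ fun n => by simpa using run.k_pred_le (n + 1) (by omega)

theorem one_le_k (run : IsFreeAdaGradRun Θ proj f γ₀ γ H x g k Γsq xplus B) (t : ℕ) : 1 ≤ k t :=
  run.k_zero ▸ run.monotone_k (Nat.zero_le t)

theorem γ_pos (run : IsFreeAdaGradRun Θ proj f γ₀ γ H x g k Γsq xplus B) (j : ℕ) : 0 < γ j := by
  rw [run.γ_eq]
  exact mul_pos run.γ₀_pos (by positivity)

theorem monotone_γ (run : IsFreeAdaGradRun Θ proj f γ₀ γ H x g k Γsq xplus B) : Monotone γ :=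
  fun i j hij => by
    simp only [run.γ_eq]
    exact mul_le_mul_of_nonneg_left (pow_le_pow_right₀ one_le_two hij) run.γ₀_pos.le

theorem sq_γ_div_γ (run : IsFreeAdaGradRun Θ proj f γ₀ γ H x g k Γsq xplus B) {i j : ℕ}
    (hij : i ≤ j) : (γ i / γ j) ^ 2 = (1 / 4) ^ (j - i) := by
  obtain ⟨m, rfl⟩ := Nat.exists_eq_add_of_le hij
  have := run.γ₀_pos
  simp only [run.γ_eq, Nat.add_sub_cancel_left, pow_add]
  field_simp
  rw [← pow_mul, mul_comm m 2, pow_mul, ← mul_pow]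
  norm_num

theorem mem (run : IsFreeAdaGradRun Θ proj f γ₀ γ H x g k Γsq xplus B) (ht : 1 ≤ t) :
    x t ∈ Θ := by
  induction t, ht using Nat.le_induction with
  | base => exact run.x_one_mem
  | succ t ht _ => rw [run.x_succ t ht, run.xplus_eq t _ ht]; exact run.proj_mem _

theorem Γsq_succ_eq_sum (run : IsFreeAdaGradRun Θ proj f γ₀ γ H x g k Γsq xplus B) (t : ℕ) :
    Γsq (t + 1) = ∑ s ∈ Icc 1 t, γ (k s) ^ 2 * ‖g s‖ ^ 2 / H ^ 2 := by
  induction t with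
  | zero => simp [run.Γsq_one]
  | succ t ih => rw [run.Γsq_succ (t + 1) (by omega), ih, sum_Icc_succ_top (by omega)]

theorem Γsq_nonneg (run : IsFreeAdaGradRun Θ proj f γ₀ γ H x g k Γsq xplus B) (ht : 1 ≤ t) :
    0 ≤ Γsq t := by
  obtain ⟨t, rfl⟩ := Nat.exists_eq_add_of_le' ht
  rw [run.Γsq_succ_eq_sum]
  positivity

theorem sq_norm_xplus_sub_le (run : IsFreeAdaGradRun Θ proj f γ₀ γ H x g k Γsq xplus B)
    (hxstar : xstar ∈ Θ) (ht : 1 ≤ t) (j : ℕ) :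
    ‖xplus t j - xstar‖ ^ 2 ≤ ‖x t - xstar‖ ^ 2 - 2 * (γ j / H) * (f (x t) - f xstar)
      + (γ j / H) ^ 2 * ‖g t‖ ^ 2 := by
  rw [run.xplus_eq t j ht]
  exact sq_norm_proj_step_sub_le run.convex run.proj_mem run.norm_sub_proj_le
    (run.subgradient t ht) hxstar (div_pos (run.γ_pos j) run.H_pos).le

theorem sq_norm_xplus_sub_le_of_isMinOn
    (run : IsFreeAdaGradRun Θ proj f γ₀ γ H x g k Γsq xplus B) (hxstar : xstar ∈ Θ)
    (hmin : ∀ y ∈ Θ, f xstar ≤ f y) (ht : 1 ≤ t) (j : ℕ) :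
    ‖xplus t j - xstar‖ ^ 2 ≤ ‖x t - xstar‖ ^ 2 + γ j ^ 2 * ‖g t‖ ^ 2 / H ^ 2 := by
  have hgap := sub_nonneg.2 (hmin _ (run.mem ht))
  have hη := (div_pos (run.γ_pos j) run.H_pos).le
  have := run.sq_norm_xplus_sub_le hxstar ht j
  rw [div_pow, div_mul_eq_mul_div] at this
  nlinarith [mul_nonneg hη hgap]

theorem sq_norm_sub_le (run : IsFreeAdaGradRun Θ proj f γ₀ γ H x g k Γsq xplus B)
    (hxstar : xstar ∈ Θ) (hmin : ∀ y ∈ Θ, f xstar ≤ f y) (ht : 1 ≤ t) :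
    ‖x t - xstar‖ ^ 2 ≤ ‖x 1 - xstar‖ ^ 2 + Γsq t := by
  induction t, ht using Nat.le_induction with
  | base => simp [run.Γsq_one]
  | succ t ht ih =>
    rw [run.x_succ t ht, run.Γsq_succ t ht]
    linarith [run.sq_norm_xplus_sub_le_of_isMinOn hxstar hmin ht (k t)]

theorem γ_lt_of_radius_lt (run : IsFreeAdaGradRun Θ proj f γ₀ γ H x g k Γsq xplus B)
    (hxstar : xstar ∈ Θ) (hmin : ∀ y ∈ Θ, f xstar ≤ f y) (ht : 1 ≤ t) (hj : 1 ≤ j)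
    (hrej : B t j < ‖xplus t j - x 1‖) : γ j < ‖x 1 - xstar‖ * √j := by
  set D := ‖x 1 - xstar‖
  set r := √(Γsq t + γ j ^ 2 * ‖g t‖ ^ 2 / H ^ 2)
  have hr : r ^ 2 = Γsq t + γ j ^ 2 * ‖g t‖ ^ 2 / H ^ 2 :=
    sq_sqrt (add_nonneg (run.Γsq_nonneg ht) (by positivity))
  have hxplus : ‖xplus t j - xstar‖ ≤ D + r :=
    (pow_le_pow_iff_left₀ (norm_nonneg _) (by positivity) two_ne_zero).1 <| by
      nlinarith [run.sq_norm_xplus_sub_le_of_isMinOn hxstar hmin ht j,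
        run.sq_norm_sub_le hxstar hmin ht, (by positivity : 0 ≤ D * r)]
  have htri : ‖xplus t j - x 1‖ ≤ ‖xplus t j - xstar‖ + D := by
    simpa only [D, norm_sub_rev xstar] using norm_sub_le_norm_sub_add_norm_sub _ xstar (x 1)
  rw [run.B_eq t j ht] at hrej
  have hsj : 0 < √(j : ℝ) := sqrt_pos.2 (by exact_mod_cast hj)
  have : 2 * γ j / √j < 2 * D := by linarith
  rw [div_lt_iff₀ hsj] at this
  linarith

theorem γ_lt_of_lt_k (run : IsFreeAdaGradRun Θ proj f γ₀ γ H x g k Γsq xplus B)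
    (hxstar : xstar ∈ Θ) (hmin : ∀ y ∈ Θ, f xstar ≤ f y) (hj : 1 ≤ j) (hjk : j < k t) :
    γ j < ‖x 1 - xstar‖ * √j := by
  have hex : ∃ t, j < k t := ⟨t, hjk⟩
  -- the level `j` was rejected at the first time `t₀` at which `k` exceeded it
  set t₀ := Nat.find hex
  have hspec : j < k t₀ := Nat.find_spec hex
  have ht₀ : 1 ≤ t₀ := Nat.one_le_iff_ne_zero.2 fun h0 => by
    rw [h0, run.k_zero] at hspec
    omega
  have hprev : k (t₀ - 1) ≤ j := not_lt.1 (Nat.find_min hex (by omega))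
  exact run.γ_lt_of_radius_lt hxstar hmin ht₀ hj (run.reject t₀ ht₀ j hprev hspec)

theorem γ_k_le (run : IsFreeAdaGradRun Θ proj f γ₀ γ H x g k Γsq xplus B)
    (hxstar : xstar ∈ Θ) (hmin : ∀ y ∈ Θ, f xstar ≤ f y) (t : ℕ) :
    γ (k t) ≤ 2 * max ‖x 1 - xstar‖ γ₀ * √(k t) := by
  obtain ⟨m, hm⟩ := Nat.exists_eq_add_of_le' (run.one_le_k t)
  rcases Nat.eq_zero_or_pos m with rfl | hm0
  · simp only [hm, run.γ_eq, zero_add, pow_one, Nat.cast_one, sqrt_one]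
    linarith [le_max_right ‖x 1 - xstar‖ γ₀]
  · have hlt := run.γ_lt_of_lt_k hxstar hmin hm0 (by omega : m < k t)
    have hγ : γ (k t) = 2 * γ m := by rw [hm, run.γ_eq, run.γ_eq, pow_succ]; ring
    have hsqrt : √(m : ℝ) ≤ √(k t) := sqrt_le_sqrt (by exact_mod_cast (by omega : m ≤ k t))
    rw [hγ]
    nlinarith [mul_le_mul (le_max_left ‖x 1 - xstar‖ γ₀) hsqrt (sqrt_nonneg _)
      (run.γ₀_pos.le.trans (le_max_right _ _))]

theorem k_le_two_mul_logb (run : IsFreeAdaGradRun Θ proj f γ₀ γ H x g k Γsq xplus B)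
    (hxstar : xstar ∈ Θ) (hmin : ∀ y ∈ Θ, f xstar ≤ f y) (t : ℕ) :
    (k t : ℝ) ≤ 2 * logb 2 (2 * max ‖x 1 - xstar‖ γ₀ / γ₀) := by
  refine natCast_le_two_mul_logb_of_two_pow_le ?_
  rw [div_mul_eq_mul_div, le_div_iff₀ run.γ₀_pos, mul_comm, ← run.γ_eq]
  exact run.γ_k_le hxstar hmin t

theorem regret_step_le (run : IsFreeAdaGradRun Θ proj f γ₀ γ H x g k Γsq xplus B)
    (hxstar : xstar ∈ Θ) (ht : 1 ≤ t) :
    f (x t) - f xstar ≤ H / (2 * γ (k t)) * (‖x t - xstar‖ ^ 2 - ‖x (t + 1) - xstar‖ ^ 2)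
      + γ (k t) * ‖g t‖ ^ 2 / (2 * H) := by
  have hstep := run.sq_norm_xplus_sub_le hxstar ht (k t)
  rw [← run.x_succ t ht] at hstep
  have := run.γ_pos (k t)
  have := run.H_pos
  rw [div_mul_eq_mul_div, div_add_div _ _ (by positivity) (by positivity),
    le_div_iff₀ (by positivity)]
  field_simp at hstep
  nlinarith

theorem sq_sub_two_mul_B_le_sq_norm_succ_sub
    (run : IsFreeAdaGradRun Θ proj f γ₀ γ H x g k Γsq xplus B) (ht : 1 ≤ t) :
    ‖x 1 - xstar‖ ^ 2 - 2 * ‖x 1 - xstar‖ * B t (k t) ≤ ‖x (t + 1) - xstar‖ ^ 2 := by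
  have hacc := run.accept t ht
  rw [← run.x_succ t ht] at hacc
  have htri : ‖x 1 - xstar‖ ≤ ‖x (t + 1) - x 1‖ + ‖x (t + 1) - xstar‖ := by
    simpa only [norm_sub_rev (x 1)] using norm_sub_le_norm_sub_add_norm_sub (x 1) (x (t + 1)) xstar
  have hgap : ‖x 1 - xstar‖ - ‖x (t + 1) - xstar‖ ≤ B t (k t) := by linarith
  nlinarith [mul_le_mul_of_nonneg_left hgap (norm_nonneg (x 1 - xstar)),
    sq_nonneg (‖x 1 - xstar‖ - ‖x (t + 1) - xstar‖)]

theorem B_k_eq (run : IsFreeAdaGradRun Θ proj f γ₀ γ H x g k Γsq xplus B) (ht : 1 ≤ t) :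
    B t (k t) = 2 * γ (k t) / √(k t) + √(Γsq (t + 1)) := by
  rw [run.B_eq t _ ht, run.Γsq_succ t ht]

theorem Γsq_succ_div_sq_le (run : IsFreeAdaGradRun Θ proj f γ₀ γ H x g k Γsq xplus B) {G : ℝ}
    (hG : ∀ t, 1 ≤ t → ‖g t‖ ≤ G) (t : ℕ) :
    Γsq (t + 1) / γ (k t) ^ 2 ≤ ∑ s ∈ Icc 1 t, (1 / 4 : ℝ) ^ (k t - k s) * (G ^ 2 / H ^ 2) := by
  rw [run.Γsq_succ_eq_sum, sum_div]
  gcongr with s hs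
  have hs := mem_Icc.1 hs
  have := run.γ_pos (k t)
  calc γ (k s) ^ 2 * ‖g s‖ ^ 2 / H ^ 2 / γ (k t) ^ 2
      = (γ (k s) / γ (k t)) ^ 2 * (‖g s‖ ^ 2 / H ^ 2) := by field_simp
    _ ≤ (1 / 4 : ℝ) ^ (k t - k s) * (G ^ 2 / H ^ 2) := by
      rw [run.sq_γ_div_γ (run.monotone_k hs.2)]
      gcongr
      exact hG s hs.1

theorem sum_switchTimes_Γsq_div_sq_le
    (run : IsFreeAdaGradRun Θ proj f γ₀ γ H x g k Γsq xplus B) {G : ℝ}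
    (hG : ∀ t, 1 ≤ t → ‖g t‖ ≤ G) {T : ℕ} (hT : 1 ≤ T) :
    ∑ t ∈ switchTimes k T, Γsq (t + 1) / γ (k t) ^ 2 ≤ T * (4 / 3) * (G ^ 2 / H ^ 2) := by
  have hS := switchTimes_subset (k := k) hT
  have hinj := (strictMonoOn_switchTimes run.monotone_k T).injOn
  calc ∑ t ∈ switchTimes k T, Γsq (t + 1) / γ (k t) ^ 2
      ≤ ∑ t ∈ switchTimes k T, ∑ s ∈ Icc 1 t, (1 / 4 : ℝ) ^ (k t - k s) * (G ^ 2 / H ^ 2) :=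
        sum_le_sum fun t _ => run.Γsq_succ_div_sq_le hG t
    _ = ∑ s ∈ Icc 1 T,
          (∑ t ∈ switchTimes k T with s ≤ t, (1 / 4 : ℝ) ^ (k t - k s)) * (G ^ 2 / H ^ 2) := by
        simp_rw [sum_mul]
        refine sum_comm' fun t s => ?_
        simp only [mem_Icc, mem_filter]
        constructor
        · rintro ⟨ht, hs1, hst⟩
          exact ⟨⟨ht, hst⟩, hs1, hst.trans (mem_Icc.1 (hS ht)).2⟩
        · rintro ⟨⟨ht, hst⟩, hs1, -⟩
          exact ⟨ht, hs1, hst⟩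
    _ ≤ ∑ s ∈ Icc 1 T, (1 - 1 / 4 : ℝ)⁻¹ * (G ^ 2 / H ^ 2) := by
        gcongr with s
        refine sum_pow_le_of_injOn (fun t ht t' ht' heq => ?_) (by norm_num) (by norm_num)
        simp only [coe_filter, Set.mem_ofPred_eq] at ht ht'
        have := run.monotone_k ht.2
        have := run.monotone_k ht'.2
        exact hinj ht.1 ht'.1 (by omega)
    _ = T * (4 / 3) * (G ^ 2 / H ^ 2) := by
        rw [sum_const, Nat.card_Icc, nsmul_eq_mul]
        norm_num
        ring

theorem sum_switchTimes_weight_le (run : IsFreeAdaGradRun Θ proj f γ₀ γ H x g k Γsq xplus B)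
    {G : ℝ} (hG : ∀ t, 1 ≤ t → ‖g t‖ ≤ G) {T : ℕ} (hT : 1 ≤ T) (hGH : T * G ^ 2 ≤ H ^ 2) :
    ∑ t ∈ switchTimes k T, H / (2 * γ (k t)) * B t (k t) ≤ 3 * H * √(k T) := by
  set S := switchTimes k T
  have hS : S ⊆ Icc 1 T := switchTimes_subset hT
  have hinj : Set.InjOn k S := (strictMonoOn_switchTimes run.monotone_k T).injOn
  have hmaps : Set.MapsTo k S (Icc 1 (k T)) := fun t ht =>
    mem_Icc.2 ⟨run.one_le_k t, run.monotone_k (mem_Icc.1 (hS ht)).2⟩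
  have hsplit : ∀ t ∈ S, H / (2 * γ (k t)) * B t (k t)
      = H * (√(k t))⁻¹ + H / 2 * (√(Γsq (t + 1)) / γ (k t)) := by
    intro t ht
    rw [run.B_k_eq (mem_Icc.1 (hS ht)).1]
    have := run.γ_pos (k t)
    field_simp
  have hlevels : ∑ t ∈ S, (√(k t : ℝ))⁻¹ ≤ 2 * √(k T) := by
    rw [← sum_image (f := fun j : ℕ => (√(j : ℝ))⁻¹) hinj]
    exact sum_inv_sqrt_le (image_subset_iff.2 hmaps)
  have hcard : (#S : ℝ) ≤ k T := by
    exact_mod_cast (card_le_card_of_injOn k hmaps hinj).trans (by simp)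
  have hratios : ∑ t ∈ S, Γsq (t + 1) / γ (k t) ^ 2 ≤ 4 := by
    have hsum := run.sum_switchTimes_Γsq_div_sq_le hG hT
    have hTGH : T * (G ^ 2 / H ^ 2) ≤ 1 := by
      rw [← mul_div_assoc, div_le_one (pow_pos run.H_pos 2)]
      exact hGH
    nlinarith
  have hroots : ∑ t ∈ S, √(Γsq (t + 1)) / γ (k t) ≤ 2 * √(k T) := by
    refine (pow_le_pow_iff_left₀ (sum_nonneg fun t _ => div_nonneg (sqrt_nonneg _)
      (run.γ_pos _).le) (by positivity) two_ne_zero).1 ?_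
    calc (∑ t ∈ S, √(Γsq (t + 1)) / γ (k t)) ^ 2
        ≤ #S * ∑ t ∈ S, (√(Γsq (t + 1)) / γ (k t)) ^ 2 := sq_sum_le_card_mul_sum_sq
      _ = #S * ∑ t ∈ S, Γsq (t + 1) / γ (k t) ^ 2 := by
        congr 1
        refine sum_congr rfl fun t _ => ?_
        rw [div_pow, sq_sqrt (run.Γsq_nonneg (by omega))]
      _ ≤ k T * 4 := by
        gcongr
        exact sum_nonneg fun t _ => div_nonneg (run.Γsq_nonneg (by omega)) (by positivity)
      _ = (2 * √(k T)) ^ 2 := by rw [mul_pow, sq_sqrt (by positivity)]; ring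
  rw [sum_congr rfl hsplit, sum_add_distrib, ← mul_sum, ← mul_sum]
  nlinarith [run.H_pos]

theorem regret_le (run : IsFreeAdaGradRun Θ proj f γ₀ γ H x g k Γsq xplus B)
    (hxstar : xstar ∈ Θ) (hmin : ∀ y ∈ Θ, f xstar ≤ f y) {G : ℝ} (hG : ∀ t, 1 ≤ t → ‖g t‖ ≤ G)
    {T : ℕ} (hT : 1 ≤ T) (hH : H = G * √T) :
    ∑ t ∈ Icc 1 T, (f (x t) - f xstar) ≤ 7 * max ‖x 1 - xstar‖ γ₀ * G * √T * √(k T) := by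
  set D := ‖x 1 - xstar‖
  set c : ℕ → ℝ := fun j => H / (2 * γ j)
  have hH0 := run.H_pos
  have hγ0 := run.γ_pos (k T)
  have hc : ∀ j, 0 ≤ c j := fun j => div_nonneg hH0.le (by linarith [run.γ_pos j])
  have hc_anti : Antitone c := fun i j hij =>
    div_le_div_of_nonneg_left hH0.le (by linarith [run.γ_pos i])
      (by linarith [run.monotone_γ hij])
  have hGH : T * G ^ 2 = H ^ 2 := by rw [hH, mul_pow, sq_sqrt T.cast_nonneg]; ring
  have hsteps : ∑ t ∈ Icc 1 T, (f (x t) - f xstar)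
      ≤ ∑ t ∈ Icc 1 T, c (k t) * (‖x t - xstar‖ ^ 2 - ‖x (t + 1) - xstar‖ ^ 2)
        + ∑ t ∈ Icc 1 T, γ (k t) * ‖g t‖ ^ 2 / (2 * H) := by
    rw [← sum_add_distrib]
    exact sum_le_sum fun t ht => run.regret_step_le hxstar (mem_Icc.1 ht).1
  have hdist : ∑ t ∈ Icc 1 T, c (k t) * (‖x t - xstar‖ ^ 2 - ‖x (t + 1) - xstar‖ ^ 2)
      ≤ 2 * D * (3 * H * √(k T)) :=
    calc _ ≤ 2 * D * (∑ t ∈ Ico 1 T, (c (k t) - c (k (t + 1))) * B t (k t)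
            + c (k T) * B T (k T)) :=
          sum_mul_sub_sq_le (c := fun t => c (k t)) (M := fun t => B t (k t))
            (fun t _ => hc_anti (run.monotone_k t.le_succ)) rfl
            (fun t ht => run.sq_sub_two_mul_B_le_sq_norm_succ_sub ht) hT (hc _)
      _ ≤ 2 * D * ∑ t ∈ switchTimes k T, c (k t) * B t (k t) := by
          gcongr
          exact sum_sub_mul_add_le_sum_switchTimes hc run.monotone_k
            (fun t ht => (norm_nonneg _).trans (run.accept t ht)) T
      _ ≤ 2 * D * (3 * H * √(k T)) := by
          gcongr
          exact run.sum_switchTimes_weight_le hG hT hGH.le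
  have hdrift : ∑ t ∈ Icc 1 T, γ (k t) * ‖g t‖ ^ 2 / (2 * H) ≤ γ (k T) * H / 2 :=
    calc _ ≤ ∑ t ∈ Icc 1 T, γ (k T) * G ^ 2 / (2 * H) := by
          gcongr with t ht
          · exact run.monotone_γ (run.monotone_k (mem_Icc.1 ht).2)
          · exact hG t (mem_Icc.1 ht).1
      _ = γ (k T) * H / 2 := by
          rw [sum_const, Nat.card_Icc, add_tsub_cancel_right, nsmul_eq_mul]
          field_simp
          linear_combination hGH
  have hγ := run.γ_k_le hxstar hmin T
  have hD : D ≤ max D γ₀ := le_max_left _ _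
  calc _ ≤ 2 * D * (3 * H * √(k T)) + γ (k T) * H / 2 := by linarith
    _ ≤ 2 * max D γ₀ * (3 * H * √(k T)) + 2 * max D γ₀ * √(k T) * H / 2 := by gcongr
    _ = 7 * max D γ₀ * G * √T * √(k T) := by rw [hH]; ring

end IsFreeAdaGradRun

end FreeAdaGrad

theorem free_adagrad_corollary_lipschitz_general
    {d : ℕ} {Θ : Set (EuclideanSpace ℝ (Fin d))}
    (hΘcv : Convex ℝ Θ)
    {f : EuclideanSpace ℝ (Fin d) → ℝ}
    {xstar : EuclideanSpace ℝ (Fin d)} (hxstarΘ : xstar ∈ Θ)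
    (hmin : ∀ y ∈ Θ, f xstar ≤ f y)
    (proj : EuclideanSpace ℝ (Fin d) → EuclideanSpace ℝ (Fin d))
    (hprojΘ : ∀ z, proj z ∈ Θ)
    (hproj : ∀ z, ∀ y ∈ Θ, ‖z - proj z‖ ≤ ‖z - y‖)
    {γ₀ : ℝ} (hγ₀ : 0 < γ₀)
    (γ : ℕ → ℝ) (hγ : ∀ j, γ j = γ₀ * 2 ^ j)
    (x g : ℕ → EuclideanSpace ℝ (Fin d)) (k : ℕ → ℕ) (Γsq : ℕ → ℝ)
    (hx1Θ : x 1 ∈ Θ)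
    (hg : ∀ t, 1 ≤ t → ∀ y, f (x t) + ⟪g t, y - x t⟫ ≤ f y)
    (hk0 : k 0 = 1) (hΓ1 : Γsq 1 = 0)
    {L : ℝ} (hL : 0 < L)
    (hLip : ∀ y z, |f y - f z| ≤ L * ‖y - z‖)
    (T : ℕ) (hT : 1 ≤ T)
    (h : ℕ → ℝ) (hh : ∀ t, 1 ≤ t → h t = L * Real.sqrt T)
    (xplus : ℕ → ℕ → EuclideanSpace ℝ (Fin d))
    (hxplus : ∀ t j, 1 ≤ t → xplus t j = proj (x t - (γ j / h t) • g t))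
    (B : ℕ → ℕ → ℝ)
    (hB : ∀ t j, 1 ≤ t → B t j =
        2 * γ j / Real.sqrt j
          + Real.sqrt (Γsq t + γ j ^ 2 * ‖g t‖ ^ 2 / h t ^ 2))
    (hkmono : ∀ t, 1 ≤ t → k (t - 1) ≤ k t)
    (hksel : ∀ t, 1 ≤ t → ‖xplus t (k t) - x 1‖ ≤ B t (k t))
    (hkmin : ∀ t, 1 ≤ t → ∀ j, k (t - 1) ≤ j → j < k t →
        B t j < ‖xplus t j - x 1‖)
    (hxrec : ∀ t, 1 ≤ t → x (t + 1) = xplus t (k t))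
    (hΓrec : ∀ t, 1 ≤ t → Γsq (t + 1) = Γsq t + γ (k t) ^ 2 * ‖g t‖ ^ 2 / h t ^ 2) :
    ∑ t ∈ Finset.Icc 1 T, (f (x t) - f xstar)
      ≤ 12.3 * max ‖x 1 - xstar‖ γ₀ * L
          * Real.sqrt (T * Real.logb 2 (2 * max ‖x 1 - xstar‖ γ₀ / γ₀)) := by
  have run : IsFreeAdaGradRun Θ proj f γ₀ γ (L * √T) x g k Γsq xplus B :=
    { convex := hΘcv, proj_mem := hprojΘ, norm_sub_proj_le := hproj, γ₀_pos := hγ₀, γ_eq := hγ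
      H_pos := mul_pos hL (Real.sqrt_pos.2 (by exact_mod_cast hT)), x_one_mem := hx1Θ
      subgradient := hg, k_zero := hk0, Γsq_one := hΓ1
      xplus_eq := fun t j ht => by rw [hxplus t j ht, hh t ht]
      B_eq := fun t j ht => by rw [hB t j ht, hh t ht]
      k_pred_le := hkmono, accept := hksel, reject := hkmin, x_succ := hxrec
      Γsq_succ := fun t ht => by rw [hΓrec t ht, hh t ht] }
  have hgL : ∀ t, 1 ≤ t → ‖g t‖ ≤ L := fun t ht =>
    norm_le_of_subgradient_of_lipschitz hL.le (hg t ht) hLip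
  have hK := run.k_le_two_mul_logb hxstarΘ hmin T
  set Dγ := max ‖x 1 - xstar‖ γ₀
  set ℓ := logb 2 (2 * Dγ / γ₀)
  have hroot : 7 * √(T * k T) ≤ 12.3 * √(T * ℓ) := by
    have hℓ : 0 ≤ T * ℓ := mul_nonneg T.cast_nonneg (by linarith [(k T).cast_nonneg (α := ℝ)])
    refine (pow_le_pow_iff_left₀ (by positivity) (by positivity) two_ne_zero).1 ?_
    rw [mul_pow, mul_pow, sq_sqrt (by positivity), sq_sqrt hℓ]
    nlinarith [T.cast_nonneg (α := ℝ)]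
  calc _ ≤ 7 * Dγ * L * √T * √(k T) := run.regret_le hxstarΘ hmin hgL hT rfl
    _ = Dγ * L * (7 * √(T * k T)) := by rw [sqrt_mul T.cast_nonneg]; ring
    _ ≤ Dγ * L * (12.3 * √(T * ℓ)) := by
        have : 0 ≤ Dγ := hγ₀.le.trans (le_max_right _ _)
        gcongr
    _ = _ := by ring

theorem free_adagrad_corollary_lipschitz
    {d : ℕ} {Θ : Set (EuclideanSpace ℝ (Fin d))}
    (hΘne : Θ.Nonempty) (hΘcl : IsClosed Θ) (hΘcv : Convex ℝ Θ)
    {f : EuclideanSpace ℝ (Fin d) → ℝ}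
    (hfconv : ConvexOn ℝ Set.univ f)
    {xstar : EuclideanSpace ℝ (Fin d)} (hxstarΘ : xstar ∈ Θ)
    (hmin : ∀ y ∈ Θ, f xstar ≤ f y)
    (proj : EuclideanSpace ℝ (Fin d) → EuclideanSpace ℝ (Fin d))
    (hprojΘ : ∀ z, proj z ∈ Θ)
    (hproj : ∀ z, ∀ y ∈ Θ, ‖z - proj z‖ ≤ ‖z - y‖)
    {γ₀ : ℝ} (hγ₀ : 0 < γ₀)
    (γ : ℕ → ℝ) (hγ : ∀ j, γ j = γ₀ * 2 ^ j)
    (x g : ℕ → EuclideanSpace ℝ (Fin d)) (k : ℕ → ℕ) (Γsq : ℕ → ℝ)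
    (hx1Θ : x 1 ∈ Θ)
    (hg : ∀ t, 1 ≤ t → ∀ y, f (x t) + ⟪g t, y - x t⟫ ≤ f y)
    (hk0 : k 0 = 1) (hΓ1 : Γsq 1 = 0)
    {L : ℝ} (hL : 0 < L)
    (hLip : ∀ y z, |f y - f z| ≤ L * ‖y - z‖)
    (T : ℕ) (hT : 1 ≤ T)
    (h : ℕ → ℝ) (hh : ∀ t, 1 ≤ t → h t = L * Real.sqrt T)
    (xplus : ℕ → ℕ → EuclideanSpace ℝ (Fin d))
    (hxplus : ∀ t j, 1 ≤ t → xplus t j = proj (x t - (γ j / h t) • g t))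
    (B : ℕ → ℕ → ℝ)
    (hB : ∀ t j, 1 ≤ t → B t j =
        2 * γ j / Real.sqrt j
          + Real.sqrt (Γsq t + γ j ^ 2 * ‖g t‖ ^ 2 / h t ^ 2))
    (hkmono : ∀ t, 1 ≤ t → k (t - 1) ≤ k t)
    (hksel : ∀ t, 1 ≤ t → ‖xplus t (k t) - x 1‖ ≤ B t (k t))
    (hkmin : ∀ t, 1 ≤ t → ∀ j, k (t - 1) ≤ j → j < k t →
        B t j < ‖xplus t j - x 1‖)
    (hxrec : ∀ t, 1 ≤ t → x (t + 1) = xplus t (k t))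
    (hΓrec : ∀ t, 1 ≤ t → Γsq (t + 1) = Γsq t + γ (k t) ^ 2 * ‖g t‖ ^ 2 / h t ^ 2) :
    ∑ t ∈ Finset.Icc 1 T, (f (x t) - f xstar)
      ≤ 12.3 * max ‖x 1 - xstar‖ γ₀ * L
          * Real.sqrt (T * Real.logb 2 (2 * max ‖x 1 - xstar‖ γ₀ / γ₀)) :=
  free_adagrad_corollary_lipschitz_general hΘcv hxstarΘ hmin proj hprojΘ hproj hγ₀ γ hγ x g k Γsq
    hx1Θ hg hk0 hΓ1 hL hLip T hT h hh xplus hxplus B hB hkmono hksel hkmin hxrec hΓrec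
end

section
/- With D_{γ₀} = max(‖x₁ − x*‖, γ₀), the warm-up Free AdaGrad iterates satisfy Σ_{t=1}^T (f(x_t) − f(x*)) ≤ 10 · D_{γ₀} · L · √T · √( 2 · log₂(2·D_{γ₀}/γ₀) ). -/
/-!
The projected step with step size `η_t = γ_{k_t}/(L√T)` gives
`‖x_{t+1} - x*‖² ≤ ‖x_t - x*‖² - 2η_t (f x_t - f x*) + γ_{k_t}²/T`, so the regret at step `t` is at
most `W_t (ψ_t - ψ_{t+1})` for the potential `ψ_t = ‖x_t - x*‖² - Γ_t²` and the nonincreasing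
weight `W_t = L√T/(2γ_{k_t})`. Summation by parts leaves only the steps where `k` increases and
the last one, each contributing `W_t (ψ_1 - ψ_{t+1})`; the acceptance test bounds
`‖x_{t+1} - x₁‖`, whence `ψ_1 - ψ_{t+1} ≤ 2‖x₁ - x*‖(2γ_{k_t}/√k_t + Γ_{t+1}) + γ_{k_t}²`.
As `k` takes distinct values at these steps, the three resulting sums are `O(D L √T √k_T)`: by
`∑_{j ≤ k_T} 1/√j ≤ 2√k_T`, by a geometric sum, and by Cauchy–Schwarz against a geometric double
sum. Finally, an index `j` is rejected only when `γ_j < ‖x₁ - x*‖ √j`, so `γ_{k_T} ≤ 2D√k_T`,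
which forces `k_T ≤ 2 log₂(2D/γ₀)`.
-/

open scoped RealInnerProductSpace
open Finset

variable {E : Type*} [NormedAddCommGroup E] [InnerProductSpace ℝ E] {K : Set E}

theorem Convex.norm_sub_le_of_forall_norm_sub_le (hK : Convex ℝ K) {z p y : E} (hp : p ∈ K)
    (hmin : ∀ w ∈ K, ‖z - p‖ ≤ ‖z - w‖) (hy : y ∈ K) : ‖p - y‖ ≤ ‖z - y‖ := by
  have hinner : ⟪z - p, y - p⟫ ≤ 0 := by
    refine (norm_eq_iInf_iff_real_inner_le_zero hK hp).1 (le_antisymm ?_ ?_) y hy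
    · have : Nonempty K := ⟨⟨p, hp⟩⟩
      exact le_ciInf fun w : K => hmin w w.2
    · exact ciInf_le ⟨0, Set.forall_mem_range.2 fun _ => norm_nonneg _⟩ (⟨p, hp⟩ : K)
  have hsplit : ‖z - y‖ ^ 2 = ‖z - p‖ ^ 2 - 2 * ⟪z - p, y - p⟫ + ‖p - y‖ ^ 2 := by
    rw [← norm_neg (p - y), neg_sub, ← norm_sub_sq_real, sub_sub_sub_cancel_right]
  rw [← pow_le_pow_iff_left₀ (norm_nonneg _) (norm_nonneg _) two_ne_zero]
  nlinarith [sq_nonneg ‖z - p‖]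

theorem Convex.norm_sub_sq_le_of_subgradient_step (hK : Convex ℝ K) {f : E → ℝ} {x g p y : E}
    {η : ℝ} (hη : 0 ≤ η) (hp : p ∈ K) (hmin : ∀ w ∈ K, ‖x - η • g - p‖ ≤ ‖x - η • g - w‖)
    (hg : f x + ⟪g, y - x⟫ ≤ f y) (hy : y ∈ K) :
    ‖p - y‖ ^ 2 ≤ ‖x - y‖ ^ 2 - 2 * η * (f x - f y) + η ^ 2 * ‖g‖ ^ 2 := by
  have hstep : ‖x - η • g - y‖ ^ 2 = ‖x - y‖ ^ 2 - 2 * η * ⟪x - y, g⟫ + η ^ 2 * ‖g‖ ^ 2 := by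
    rw [sub_right_comm, norm_sub_sq_real, inner_smul_right, norm_smul, mul_pow,
      Real.norm_eq_abs, sq_abs]
    ring
  have hgap : f x - f y ≤ ⟪x - y, g⟫ := by
    rw [real_inner_comm, ← neg_sub y x, inner_neg_right]
    linarith
  calc ‖p - y‖ ^ 2 ≤ ‖x - η • g - y‖ ^ 2 := by
        gcongr
        exact hK.norm_sub_le_of_forall_norm_sub_le hp hmin hy
    _ ≤ _ := by rw [hstep]; nlinarith

theorem sum_Icc_one_div_sqrt_le (n : ℕ) : ∑ j ∈ Icc 1 n, 1 / √(j : ℝ) ≤ 2 * √n := by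
  induction n with
  | zero => simp
  | succ n ih =>
    rw [sum_Icc_succ_top (by omega), Nat.cast_succ]
    have hpos : 0 < √((n : ℝ) + 1) := by positivity
    have hsq : √((n : ℝ) + 1) ^ 2 = n + 1 := Real.sq_sqrt (by positivity)
    have hsq' : √(n : ℝ) ^ 2 = n := Real.sq_sqrt (by positivity)
    have hstep : 1 / √((n : ℝ) + 1) ≤ 2 * √((n : ℝ) + 1) - 2 * √n := by
      rw [div_le_iff₀ hpos]
      nlinarith [sq_nonneg (√((n : ℝ) + 1) - √n)]
    linarith

theorem sum_quarter_pow_le (S : Finset ℕ) : ∑ m ∈ S, (1 / 4 : ℝ) ^ m ≤ 4 / 3 := by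
  have h := (summable_geometric_of_lt_one (by norm_num) (by norm_num : (1 / 4 : ℝ) < 1)).sum_le_tsum
    S fun _ _ => by positivity
  rw [tsum_geometric_of_lt_one (by norm_num) (by norm_num)] at h
  norm_num at h
  exact h

theorem sum_Icc_two_pow_le (n : ℕ) : ∑ j ∈ Icc 1 n, (2 : ℝ) ^ j ≤ 2 ^ (n + 1) := by
  have hsub : Icc 1 n ⊆ range (n + 1) := fun j hj => by
    simp only [mem_Icc, mem_range] at hj ⊢; omega
  calc ∑ j ∈ Icc 1 n, (2 : ℝ) ^ j ≤ ∑ j ∈ range (n + 1), (2 : ℝ) ^ j :=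
        sum_le_sum_of_subset_of_nonneg hsub fun _ _ _ => by positivity
    _ ≤ 2 ^ (n + 1) := by rw [geom_sum_eq (by norm_num)]; norm_num

theorem sum_comp_le_sum_of_injOn {ι κ M : Type*} [AddCommMonoid M] [PartialOrder M]
    [IsOrderedAddMonoid M] {J : Finset ι} {S : Finset κ} {k : ι → κ} {h : κ → M}
    (hk : Set.InjOn k J) (hmaps : ∀ t ∈ J, k t ∈ S) (h0 : ∀ j ∈ S, 0 ≤ h j) :
    ∑ t ∈ J, h (k t) ≤ ∑ j ∈ S, h j := by
  classical
  rw [← sum_image hk]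
  exact sum_le_sum_of_subset_of_nonneg (image_subset_iff.2 hmaps) fun j hj _ => h0 j hj

theorem sum_sum_quarter_pow_sub_le {k : ℕ → ℕ} (hk : Monotone k) {J : Finset ℕ} {n : ℕ}
    (hJ : J ⊆ Icc 1 n) (hinj : Set.InjOn k J) :
    ∑ t ∈ J, ∑ s ∈ Icc 1 t, (1 / 4 : ℝ) ^ (k t - k s) ≤ 4 / 3 * n := by
  classical
  have hswap : ∀ t s, t ∈ J ∧ s ∈ Icc 1 t ↔ t ∈ J.filter (s ≤ ·) ∧ s ∈ Icc 1 n := fun t s => by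
    have := @hJ t
    simp only [mem_Icc, mem_filter] at this ⊢
    constructor
    · rintro ⟨htJ, hs⟩; have := this htJ; exact ⟨⟨htJ, hs.2⟩, hs.1, by omega⟩
    · rintro ⟨⟨htJ, hst⟩, hs⟩; exact ⟨htJ, hs.1, hst⟩
  rw [sum_comm' hswap]
  calc ∑ s ∈ Icc 1 n, ∑ t ∈ J.filter (s ≤ ·), (1 / 4 : ℝ) ^ (k t - k s)
      ≤ ∑ _s ∈ Icc 1 n, (4 / 3 : ℝ) := by
        refine sum_le_sum fun s _ => ?_
        rw [← sum_image (g := (k · - k s)) fun t ht t' ht' heq => ?_]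
        · exact sum_quarter_pow_le _
        simp only [coe_filter, Set.mem_ofPred_eq] at ht ht'
        have := hk ht.2; have := hk ht'.2
        exact hinj ht.1 ht'.1 (by simp only at heq; omega)
    _ = 4 / 3 * n := by simp [mul_comm]

theorem le_two_mul_logb_of_mul_two_pow_le {a c : ℝ} {n : ℕ} (hc : 0 < c)
    (h : c * 2 ^ n ≤ a * √n) : (n : ℝ) ≤ 2 * Real.logb 2 (a / c) := by
  set s := √((2 : ℝ) ^ n)
  have hs : 0 < s := by positivity
  have hss : s ^ 2 = 2 ^ n := Real.sq_sqrt (by positivity)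
  have hns : √(n : ℝ) ≤ s := Real.sqrt_le_sqrt (by exact_mod_cast Nat.lt_two_pow_self.le)
  have ha : 0 ≤ a := by
    by_contra! ha
    nlinarith [Real.sqrt_nonneg n, pow_pos (two_pos : (0:ℝ) < 2) n]
  have hsa : s ≤ a / c := by
    rw [le_div_iff₀ hc]
    nlinarith [mul_le_mul_of_nonneg_left hns ha]
  have hpow : (2 : ℝ) ^ n ≤ (a / c) ^ 2 := hss ▸ pow_le_pow_left₀ hs.le hsa 2
  have := Real.logb_le_logb_of_le one_lt_two (by positivity) hpow
  rwa [Real.logb_pow, Real.logb_pow, Real.logb_self_eq_one one_lt_two, mul_one] at this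

theorem sum_Icc_mul_sub_eq {R : Type*} [CommRing R] (W ψ : ℕ → R) (n : ℕ) :
    ∑ t ∈ Icc 1 n, W t * (ψ t - ψ (t + 1)) =
      ∑ t ∈ Icc 1 n, (W t - W (t + 1)) * (ψ 1 - ψ (t + 1)) + W (n + 1) * (ψ 1 - ψ (n + 1)) := by
  induction n with
  | zero => simp
  | succ n ih => rw [sum_Icc_succ_top (by omega), sum_Icc_succ_top (by omega), ih]; ring

theorem sum_Icc_le_sum_filter_of_potential {r W ψ U : ℕ → ℝ} {n : ℕ}
    (hr : ∀ t ∈ Icc 1 n, r t ≤ W t * (ψ t - ψ (t + 1)))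
    (hW0 : ∀ t ∈ Icc 1 n, 0 ≤ W t) (hW : ∀ t ∈ Icc 1 n, W (t + 1) ≤ W t)
    (hU : ∀ t ∈ Icc 1 n, ψ 1 - ψ (t + 1) ≤ U t) (hU0 : ∀ t ∈ Icc 1 n, 0 ≤ U t) :
    ∑ t ∈ Icc 1 n, r t ≤ ∑ t ∈ Icc 1 n with (t = n ∨ W (t + 1) ≠ W t), W t * U t := by
  -- Cutting the weights off after `n` makes the boundary term of the summation by parts vanish.
  set W' : ℕ → ℝ := fun t => if t ≤ n then W t else 0
  rw [sum_filter]
  calc ∑ t ∈ Icc 1 n, r t ≤ ∑ t ∈ Icc 1 n, W' t * (ψ t - ψ (t + 1)) :=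
        sum_le_sum fun t ht => by simpa [W', (mem_Icc.1 ht).2] using hr t ht
    _ = ∑ t ∈ Icc 1 n, (W' t - W' (t + 1)) * (ψ 1 - ψ (t + 1)) := by
        rw [sum_Icc_mul_sub_eq]; simp [W']
    _ ≤ _ := sum_le_sum fun t ht => ?_
  obtain ⟨h1, htn⟩ := mem_Icc.1 ht
  rcases htn.eq_or_lt with rfl | htn
  · simpa [W'] using mul_le_mul_of_nonneg_left (hU _ ht) (hW0 _ ht)
  have hW' : W' t - W' (t + 1) = W t - W (t + 1) := by simp [W', htn.le, Nat.succ_le_of_lt htn]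
  rw [hW']
  split_ifs with hjump
  · calc (W t - W (t + 1)) * (ψ 1 - ψ (t + 1)) ≤ (W t - W (t + 1)) * U t :=
          mul_le_mul_of_nonneg_left (hU t ht) (sub_nonneg.2 (hW t ht))
      _ ≤ W t * U t := mul_le_mul_of_nonneg_right
          (by linarith [hW0 (t + 1) (mem_Icc.2 ⟨by omega, htn⟩)]) (hU0 t ht)
  · rw [not_or, not_not] at hjump
    rw [hjump.2, sub_self, zero_mul]

theorem Monotone.injOn_of_lt_succ {α : Type*} [Preorder α] {k : ℕ → α} (hk : Monotone k)
    {J : Finset ℕ} {n : ℕ} (hJ : ∀ t ∈ J, t ≤ n) (hjump : ∀ t ∈ J, t < n → k t < k (t + 1)) :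
    Set.InjOn k J := by
  have key : ∀ t ∈ J, ∀ s ∈ J, t < s → k t < k s := fun t ht s hs hts =>
    (hjump t ht (hts.trans_le (hJ s hs))).trans_le (hk hts)
  intro t ht s hs hts
  rcases lt_trichotomy t s with h | h | h
  · exact absurd hts (key t ht s hs h).ne
  · exact h
  · exact absurd hts (key s hs t ht h).ne'

/-- The relations defining a run of warm-up Free AdaGrad; `xplus t j` and `B t j` are the
paper's `x_t⁺(j)` and `B_{t+1}(j)`, and `Γsq t` is `Γ_t²`. -/
structure IsWarmupFreeAdaGradRun (Θ : Set E) (f : E → ℝ) (L : ℝ) (proj : E → E) (γ₀ : ℝ)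
    (γ : ℕ → ℝ) (T : ℕ) (x g : ℕ → E) (k : ℕ → ℕ) (Γsq : ℕ → ℝ) (xplus : ℕ → ℕ → E)
    (B : ℕ → ℕ → ℝ) : Prop where
  convex : Convex ℝ Θ
  proj_mem : ∀ z, proj z ∈ Θ
  norm_sub_proj_le : ∀ z, ∀ y ∈ Θ, ‖z - proj z‖ ≤ ‖z - y‖
  L_pos : 0 < L
  γ₀_pos : 0 < γ₀
  γ_eq : ∀ j, γ j = γ₀ * 2 ^ j
  one_le_T : 1 ≤ T
  x_one_mem : x 1 ∈ Θ
  subgradient : ∀ t, 1 ≤ t → ∀ y, f (x t) + ⟪g t, y - x t⟫ ≤ f y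
  norm_g_le : ∀ t, 1 ≤ t → ‖g t‖ ≤ L
  k_zero : k 0 = 1
  Γsq_one : Γsq 1 = 0
  xplus_eq : ∀ t j, 1 ≤ t → xplus t j = proj (x t - (γ j / (L * √T)) • g t)
  B_eq : ∀ t j, 1 ≤ t → B t j = 2 * γ j / √j + √(Γsq t + γ j ^ 2 / T)
  k_pred_le : ∀ t, 1 ≤ t → k (t - 1) ≤ k t
  accepted : ∀ t, 1 ≤ t → ‖xplus t (k t) - x 1‖ ≤ B t (k t)
  rejected : ∀ t, 1 ≤ t → ∀ j, k (t - 1) ≤ j → j < k t → B t j < ‖xplus t j - x 1‖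
  x_succ : ∀ t, 1 ≤ t → x (t + 1) = xplus t (k t)
  Γsq_succ : ∀ t, 1 ≤ t → Γsq (t + 1) = Γsq t + γ (k t) ^ 2 / T

namespace IsWarmupFreeAdaGradRun

variable {Θ : Set E} {f : E → ℝ} {L : ℝ} {proj : E → E} {γ₀ : ℝ} {γ : ℕ → ℝ} {T : ℕ}
  {x g : ℕ → E} {k : ℕ → ℕ} {Γsq : ℕ → ℝ} {xplus : ℕ → ℕ → E} {B : ℕ → ℕ → ℝ} {xstar : E}

theorem monotone_k (run : IsWarmupFreeAdaGradRun Θ f L proj γ₀ γ T x g k Γsq xplus B) :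
    Monotone k :=
  monotone_nat_of_le_succ fun t => by simpa using run.k_pred_le (t + 1) (by omega)

theorem one_le_k (run : IsWarmupFreeAdaGradRun Θ f L proj γ₀ γ T x g k Γsq xplus B)
    (t : ℕ) : 1 ≤ k t := run.k_zero ▸ run.monotone_k (Nat.zero_le t)

theorem γ_pos (run : IsWarmupFreeAdaGradRun Θ f L proj γ₀ γ T x g k Γsq xplus B)
    (j : ℕ) : 0 < γ j := by rw [run.γ_eq]; exact mul_pos run.γ₀_pos (by positivity)

theorem γ_mono (run : IsWarmupFreeAdaGradRun Θ f L proj γ₀ γ T x g k Γsq xplus B) :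
    Monotone γ := fun i j hij => by
  rw [run.γ_eq, run.γ_eq]; gcongr; exacts [run.γ₀_pos.le, one_le_two]

theorem γ_div_sq (run : IsWarmupFreeAdaGradRun Θ f L proj γ₀ γ T x g k Γsq xplus B)
    {i j : ℕ} (hij : i ≤ j) : (γ i / γ j) ^ 2 = (1 / 4) ^ (j - i) := by
  obtain ⟨m, rfl⟩ := Nat.exists_eq_add_of_le hij
  have := run.γ₀_pos
  rw [run.γ_eq, run.γ_eq, Nat.add_sub_cancel_left, pow_add]
  field_simp
  rw [← pow_mul, mul_comm m 2, pow_mul, ← mul_pow]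
  norm_num

theorem sqrt_T_pos (run : IsWarmupFreeAdaGradRun Θ f L proj γ₀ γ T x g k Γsq xplus B) :
    0 < √(T : ℝ) := Real.sqrt_pos.2 (by exact_mod_cast run.one_le_T)

theorem L_mul_sqrt_T_pos (run : IsWarmupFreeAdaGradRun Θ f L proj γ₀ γ T x g k Γsq xplus B) :
    0 < L * √T :=
  mul_pos run.L_pos run.sqrt_T_pos

theorem x_mem (run : IsWarmupFreeAdaGradRun Θ f L proj γ₀ γ T x g k Γsq xplus B)
    {t : ℕ} (ht : 1 ≤ t) : x t ∈ Θ := by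
  induction t, ht using Nat.le_induction with
  | base => exact run.x_one_mem
  | succ t ht _ => rw [run.x_succ t ht, run.xplus_eq t _ ht]; exact run.proj_mem _

theorem Γsq_succ_eq_sum (run : IsWarmupFreeAdaGradRun Θ f L proj γ₀ γ T x g k Γsq xplus B)
    (t : ℕ) : Γsq (t + 1) = ∑ s ∈ Icc 1 t, γ (k s) ^ 2 / T := by
  induction t with
  | zero => simpa using run.Γsq_one
  | succ t ih => rw [run.Γsq_succ (t + 1) (by omega), ih, sum_Icc_succ_top (by omega)]

theorem Γsq_nonneg (run : IsWarmupFreeAdaGradRun Θ f L proj γ₀ γ T x g k Γsq xplus B)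
    {t : ℕ} (ht : 1 ≤ t) : 0 ≤ Γsq t := by
  obtain ⟨s, rfl⟩ := Nat.exists_eq_add_of_le' ht
  rw [run.Γsq_succ_eq_sum]
  positivity

theorem γ_succ (run : IsWarmupFreeAdaGradRun Θ f L proj γ₀ γ T x g k Γsq xplus B)
    (j : ℕ) : γ (j + 1) = 2 * γ j := by
  rw [run.γ_eq, run.γ_eq, pow_succ]; ring

theorem step_nonneg (run : IsWarmupFreeAdaGradRun Θ f L proj γ₀ γ T x g k Γsq xplus B)
    (j : ℕ) : 0 ≤ γ j / (L * √T) :=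
  div_nonneg (run.γ_pos j).le run.L_mul_sqrt_T_pos.le

theorem norm_xplus_sub_sq_le (run : IsWarmupFreeAdaGradRun Θ f L proj γ₀ γ T x g k Γsq xplus B)
    {t : ℕ} (ht : 1 ≤ t) (j : ℕ) {y : E} (hy : y ∈ Θ) :
    ‖xplus t j - y‖ ^ 2 ≤
      ‖x t - y‖ ^ 2 - 2 * (γ j / (L * √T)) * (f (x t) - f y) + γ j ^ 2 / T := by
  have hstep := run.convex.norm_sub_sq_le_of_subgradient_step (run.step_nonneg j)
    (run.proj_mem _) (run.norm_sub_proj_le _) (run.subgradient t ht y) hy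
  rw [← run.xplus_eq t j ht] at hstep
  have hnoise : (γ j / (L * √T)) ^ 2 * ‖g t‖ ^ 2 ≤ γ j ^ 2 / T := by
    calc (γ j / (L * √T)) ^ 2 * ‖g t‖ ^ 2 ≤ (γ j / (L * √T)) ^ 2 * L ^ 2 := by
          gcongr; exact run.norm_g_le t ht
      _ = γ j ^ 2 / T := by
          rw [div_pow, mul_pow, Real.sq_sqrt (Nat.cast_nonneg T)]
          field_simp [run.L_pos.ne']
  linarith

theorem regret_le (run : IsWarmupFreeAdaGradRun Θ f L proj γ₀ γ T x g k Γsq xplus B)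
    (hxstar : xstar ∈ Θ) {t : ℕ} (ht : 1 ≤ t) :
    f (x t) - f xstar ≤ L * √T / (2 * γ (k t)) *
      ((‖x t - xstar‖ ^ 2 - Γsq t) - (‖x (t + 1) - xstar‖ ^ 2 - Γsq (t + 1))) := by
  have h := run.norm_xplus_sub_sq_le ht (k t) hxstar
  rw [← run.x_succ t ht] at h
  have hγ := run.γ_pos (k t)
  have hL := run.L_pos.ne'
  have hT := run.sqrt_T_pos.ne'
  calc f (x t) - f xstar
      = L * √T / (2 * γ (k t)) * (2 * (γ (k t) / (L * √T)) * (f (x t) - f xstar)) := by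
        field_simp
    _ ≤ _ := by
        refine mul_le_mul_of_nonneg_left ?_ (div_nonneg run.L_mul_sqrt_T_pos.le (by linarith))
        rw [run.Γsq_succ t ht]
        linarith

theorem norm_sub_sq_le_add_Γsq (run : IsWarmupFreeAdaGradRun Θ f L proj γ₀ γ T x g k Γsq xplus B)
    (hxstar : xstar ∈ Θ) (hmin : ∀ y ∈ Θ, f xstar ≤ f y) {t : ℕ} (ht : 1 ≤ t) :
    ‖x t - xstar‖ ^ 2 ≤ ‖x 1 - xstar‖ ^ 2 + Γsq t := by
  induction t, ht using Nat.le_induction with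
  | base => rw [run.Γsq_one, add_zero]
  | succ t ht ih =>
    have h := run.norm_xplus_sub_sq_le ht (k t) hxstar
    rw [← run.x_succ t ht] at h
    have hr : 0 ≤ f (x t) - f xstar := sub_nonneg.2 (hmin _ (run.x_mem ht))
    rw [run.Γsq_succ t ht]
    nlinarith [mul_nonneg (run.step_nonneg (k t)) hr]

theorem γ_lt_of_rejected (run : IsWarmupFreeAdaGradRun Θ f L proj γ₀ γ T x g k Γsq xplus B)
    (hxstar : xstar ∈ Θ) (hmin : ∀ y ∈ Θ, f xstar ≤ f y) {t j : ℕ} (ht : 1 ≤ t)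
    (hj : k (t - 1) ≤ j) (hjt : j < k t) : γ j < ‖x 1 - xstar‖ * √j := by
  set D₁ := ‖x 1 - xstar‖
  set Q := Γsq t + γ j ^ 2 / T
  have hQ : 0 ≤ Q := add_nonneg (run.Γsq_nonneg ht) (by positivity)
  have hsq : ‖xplus t j - xstar‖ ^ 2 ≤ (D₁ + √Q) ^ 2 := by
    have h := run.norm_xplus_sub_sq_le ht j hxstar
    have hr : 0 ≤ f (x t) - f xstar := sub_nonneg.2 (hmin _ (run.x_mem ht))
    have := run.norm_sub_sq_le_add_Γsq hxstar hmin ht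
    nlinarith [Real.sq_sqrt hQ, mul_nonneg (run.step_nonneg j) hr, norm_nonneg (x 1 - xstar),
      Real.sqrt_nonneg Q, mul_nonneg (norm_nonneg (x 1 - xstar)) (Real.sqrt_nonneg Q)]
  have hnorm : ‖xplus t j - xstar‖ ≤ D₁ + √Q :=
    (pow_le_pow_iff_left₀ (norm_nonneg _) (by positivity) two_ne_zero).1 hsq
  have htri : ‖xplus t j - x 1‖ ≤ ‖xplus t j - xstar‖ + D₁ := by
    simpa [D₁, norm_sub_rev xstar] using norm_sub_le_norm_sub_add_norm_sub (xplus t j) xstar (x 1)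
  have hrej := run.rejected t ht j hj hjt
  rw [run.B_eq t j ht] at hrej
  have hj1 : 0 < √(j : ℝ) := Real.sqrt_pos.2 (by exact_mod_cast (run.one_le_k (t - 1)).trans hj)
  have : 2 * γ j / √j < 2 * D₁ := by linarith
  rw [div_lt_iff₀ hj1] at this
  linarith

theorem γ_k_le (run : IsWarmupFreeAdaGradRun Θ f L proj γ₀ γ T x g k Γsq xplus B)
    (hxstar : xstar ∈ Θ) (hmin : ∀ y ∈ Θ, f xstar ≤ f y) (t : ℕ) :
    γ (k t) ≤ 2 * max ‖x 1 - xstar‖ γ₀ * √(k t) := by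
  induction t with
  | zero =>
    rw [run.k_zero, run.γ_eq, Nat.cast_one, Real.sqrt_one, mul_one, pow_one, mul_comm]
    gcongr
    exact le_max_right _ _
  | succ t ih =>
    rcases (run.monotone_k (Nat.le_add_right t 1)).eq_or_lt with heq | hlt
    · rwa [← heq]
    -- the index `k (t + 1) - 1` was rejected at step `t + 1`
    obtain ⟨j, hj⟩ : ∃ j, k (t + 1) = j + 1 := ⟨k (t + 1) - 1, by omega⟩
    have hrej := run.γ_lt_of_rejected hxstar hmin (t := t + 1) (j := j) (by omega)
      (by rw [Nat.add_sub_cancel]; omega) (by omega)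
    calc γ (k (t + 1)) = 2 * γ j := by rw [hj, run.γ_succ]
      _ ≤ 2 * (‖x 1 - xstar‖ * √j) := by linarith
      _ ≤ 2 * max ‖x 1 - xstar‖ γ₀ * √(k (t + 1)) := by
          rw [hj, mul_assoc]
          gcongr
          · exact le_max_left _ _
          · simp

theorem k_le_logb (run : IsWarmupFreeAdaGradRun Θ f L proj γ₀ γ T x g k Γsq xplus B)
    (hxstar : xstar ∈ Θ) (hmin : ∀ y ∈ Θ, f xstar ≤ f y) (t : ℕ) :
    (k t : ℝ) ≤ 2 * Real.logb 2 (2 * max ‖x 1 - xstar‖ γ₀ / γ₀) :=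
  le_two_mul_logb_of_mul_two_pow_le run.γ₀_pos (run.γ_eq (k t) ▸ run.γ_k_le hxstar hmin t)

theorem Γsq_succ_le (run : IsWarmupFreeAdaGradRun Θ f L proj γ₀ γ T x g k Γsq xplus B)
    {t : ℕ} (htT : t ≤ T) : Γsq (t + 1) ≤ γ (k t) ^ 2 := by
  have hT : (0 : ℝ) < T := by exact_mod_cast run.one_le_T
  rw [run.Γsq_succ_eq_sum]
  calc ∑ s ∈ Icc 1 t, γ (k s) ^ 2 / T ≤ ∑ s ∈ Icc 1 t, γ (k t) ^ 2 / T :=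
        sum_le_sum fun s hs => by
          gcongr
          exacts [(run.γ_pos _).le, run.γ_mono (run.monotone_k (mem_Icc.1 hs).2)]
    _ = t / T * γ (k t) ^ 2 := by rw [sum_const, Nat.card_Icc, nsmul_eq_mul]; push_cast; ring
    _ ≤ γ (k t) ^ 2 := by
        refine mul_le_of_le_one_left (sq_nonneg _) ((div_le_one hT).2 ?_)
        exact_mod_cast htT

theorem potential_gap_le (run : IsWarmupFreeAdaGradRun Θ f L proj γ₀ γ T x g k Γsq xplus B)
    {t : ℕ} (ht : 1 ≤ t) (htT : t ≤ T) :
    (‖x 1 - xstar‖ ^ 2 - Γsq 1) - (‖x (t + 1) - xstar‖ ^ 2 - Γsq (t + 1)) ≤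
      2 * ‖x 1 - xstar‖ * (2 * γ (k t) / √(k t) + √(Γsq (t + 1))) + γ (k t) ^ 2 := by
  set D₁ := ‖x 1 - xstar‖
  set ρ := ‖x (t + 1) - x 1‖
  have hρ : ρ ≤ 2 * γ (k t) / √(k t) + √(Γsq (t + 1)) := by
    have := run.accepted t ht
    rwa [← run.x_succ t ht, run.B_eq t _ ht, ← run.Γsq_succ t ht] at this
  have htri : D₁ ≤ ρ + ‖x (t + 1) - xstar‖ := by
    simpa [D₁, ρ, norm_sub_rev (x 1)] using
      norm_sub_le_norm_sub_add_norm_sub (x 1) (x (t + 1)) xstar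
  have hdist : D₁ ^ 2 - ‖x (t + 1) - xstar‖ ^ 2 ≤ 2 * D₁ * ρ := by
    rcases le_total D₁ ‖x (t + 1) - xstar‖ with h | h
    · nlinarith [norm_nonneg (x 1 - xstar), norm_nonneg (x (t + 1) - x 1)]
    · nlinarith [norm_nonneg (x (t + 1) - xstar), norm_nonneg (x (t + 1) - x 1)]
  rw [run.Γsq_one]
  nlinarith [run.Γsq_succ_le htT, norm_nonneg (x 1 - xstar)]

theorem k_mem_Icc (run : IsWarmupFreeAdaGradRun Θ f L proj γ₀ γ T x g k Γsq xplus B)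
    {J : Finset ℕ} (hJ : J ⊆ Icc 1 T) : ∀ t ∈ J, k t ∈ Icc 1 (k T) := fun t ht =>
  mem_Icc.2 ⟨run.one_le_k t, run.monotone_k (mem_Icc.1 (hJ ht)).2⟩

theorem sum_one_div_sqrt_k_le (run : IsWarmupFreeAdaGradRun Θ f L proj γ₀ γ T x g k Γsq xplus B)
    {J : Finset ℕ} (hJ : J ⊆ Icc 1 T) (hinj : Set.InjOn k J) :
    ∑ t ∈ J, 1 / √(k t : ℝ) ≤ 2 * √(k T) :=
  (sum_comp_le_sum_of_injOn (h := fun j : ℕ => 1 / √(j : ℝ)) hinj (run.k_mem_Icc hJ)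
    fun _ _ => by positivity).trans (sum_Icc_one_div_sqrt_le _)

theorem sum_γ_k_le (run : IsWarmupFreeAdaGradRun Θ f L proj γ₀ γ T x g k Γsq xplus B)
    {J : Finset ℕ} (hJ : J ⊆ Icc 1 T) (hinj : Set.InjOn k J) :
    ∑ t ∈ J, γ (k t) ≤ 2 * γ (k T) :=
  calc ∑ t ∈ J, γ (k t) ≤ ∑ j ∈ Icc 1 (k T), γ j :=
        sum_comp_le_sum_of_injOn hinj (run.k_mem_Icc hJ) fun j _ => (run.γ_pos j).le
    _ = γ₀ * ∑ j ∈ Icc 1 (k T), (2 : ℝ) ^ j := by simp_rw [run.γ_eq, mul_sum]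
    _ ≤ γ₀ * 2 ^ (k T + 1) := by gcongr; exacts [run.γ₀_pos.le, sum_Icc_two_pow_le _]
    _ = 2 * γ (k T) := by rw [run.γ_eq]; ring

theorem weight_nonneg (run : IsWarmupFreeAdaGradRun Θ f L proj γ₀ γ T x g k Γsq xplus B)
    (t : ℕ) : 0 ≤ L * √T / (2 * γ (k t)) :=
  div_nonneg run.L_mul_sqrt_T_pos.le (by linarith [run.γ_pos (k t)])

theorem weight_antitone (run : IsWarmupFreeAdaGradRun Θ f L proj γ₀ γ T x g k Γsq xplus B) :
    Antitone fun t => L * √T / (2 * γ (k t)) := fun s t hst =>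
  div_le_div_of_nonneg_left run.L_mul_sqrt_T_pos.le (by linarith [run.γ_pos (k s)])
    (by linarith [run.γ_mono (run.monotone_k hst)])

theorem sum_weight_mul_sqrt_Γsq_le
    (run : IsWarmupFreeAdaGradRun Θ f L proj γ₀ γ T x g k Γsq xplus B) {J : Finset ℕ}
    (hJ : J ⊆ Icc 1 T) (hinj : Set.InjOn k J) :
    ∑ t ∈ J, L * √T / (2 * γ (k t)) * √(Γsq (t + 1)) ≤ L * √T * √(k T) := by
  have hsq : ∀ t, (L * √T / (2 * γ (k t)) * √(Γsq (t + 1))) ^ 2 =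
      L ^ 2 / 4 * ∑ s ∈ Icc 1 t, (1 / 4 : ℝ) ^ (k t - k s) := by
    intro t
    rw [mul_pow, Real.sq_sqrt (run.Γsq_nonneg (Nat.le_add_left 1 t)), run.Γsq_succ_eq_sum,
      mul_sum, mul_sum]
    refine sum_congr rfl fun s hs => ?_
    rw [← run.γ_div_sq (run.monotone_k (mem_Icc.1 hs).2)]
    have := run.γ_pos (k t)
    have : (T : ℝ) ≠ 0 := Nat.cast_ne_zero.2 (by have := run.one_le_T; omega)
    rw [div_pow, mul_pow, Real.sq_sqrt (Nat.cast_nonneg T)]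
    field_simp
    ring
  have hcard : (#J : ℝ) ≤ k T := by
    exact_mod_cast (card_le_card_of_injOn k (run.k_mem_Icc hJ) hinj).trans (by simp)
  have hsum_sq : ∑ t ∈ J, (L * √T / (2 * γ (k t)) * √(Γsq (t + 1))) ^ 2 ≤ L ^ 2 * T := by
    simp_rw [hsq, ← mul_sum]
    calc L ^ 2 / 4 * ∑ t ∈ J, ∑ s ∈ Icc 1 t, (1 / 4 : ℝ) ^ (k t - k s)
        ≤ L ^ 2 / 4 * (4 / 3 * T) := by
          gcongr; exact sum_sum_quarter_pow_sub_le run.monotone_k hJ hinj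
      _ ≤ L ^ 2 * T := by nlinarith [sq_nonneg L, (Nat.cast_nonneg T : (0 : ℝ) ≤ T)]
  rw [← pow_le_pow_iff_left₀
    (sum_nonneg fun t _ => mul_nonneg (run.weight_nonneg t) (Real.sqrt_nonneg _))
    (mul_nonneg run.L_mul_sqrt_T_pos.le (Real.sqrt_nonneg _)) two_ne_zero]
  calc (∑ t ∈ J, L * √T / (2 * γ (k t)) * √(Γsq (t + 1))) ^ 2
      ≤ #J * ∑ t ∈ J, (L * √T / (2 * γ (k t)) * √(Γsq (t + 1))) ^ 2 := sq_sum_le_card_mul_sum_sq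
    _ ≤ k T * (L ^ 2 * T) := mul_le_mul hcard hsum_sq (sum_nonneg fun _ _ => sq_nonneg _)
        (Nat.cast_nonneg _)
    _ = (L * √T * √(k T)) ^ 2 := by
        rw [mul_pow, mul_pow, Real.sq_sqrt (Nat.cast_nonneg _), Real.sq_sqrt (Nat.cast_nonneg _)]
        ring

theorem sum_weight_mul_gap_le (run : IsWarmupFreeAdaGradRun Θ f L proj γ₀ γ T x g k Γsq xplus B)
    (hxstar : xstar ∈ Θ) (hmin : ∀ y ∈ Θ, f xstar ≤ f y) {J : Finset ℕ} (hJ : J ⊆ Icc 1 T)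
    (hinj : Set.InjOn k J) :
    ∑ t ∈ J, L * √T / (2 * γ (k t)) *
        (2 * ‖x 1 - xstar‖ * (2 * γ (k t) / √(k t) + √(Γsq (t + 1))) + γ (k t) ^ 2)
      ≤ 8 * max ‖x 1 - xstar‖ γ₀ * L * √T * √(k T) := by
  set D₁ := ‖x 1 - xstar‖
  set D := max D₁ γ₀
  have hsplit : ∀ t ∈ J, L * √T / (2 * γ (k t)) *
      (2 * D₁ * (2 * γ (k t) / √(k t) + √(Γsq (t + 1))) + γ (k t) ^ 2) =
      2 * D₁ * (L * √T) * (1 / √(k t : ℝ)) + 2 * D₁ * (L * √T / (2 * γ (k t)) * √(Γsq (t + 1)))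
        + L * √T / 2 * γ (k t) := by
    intro t _
    have := run.γ_pos (k t)
    field_simp
  rw [sum_congr rfl hsplit, sum_add_distrib, sum_add_distrib, ← mul_sum, ← mul_sum, ← mul_sum]
  have hLT := run.L_mul_sqrt_T_pos
  have hD₁ : 2 * D₁ ≤ 2 * D := by linarith [le_max_left D₁ γ₀]
  have hγ : ∑ t ∈ J, γ (k t) ≤ 2 * (2 * D * √(k T)) :=
    (run.sum_γ_k_le hJ hinj).trans (by linarith [run.γ_k_le hxstar hmin T])
  calc 2 * D₁ * (L * √T) * ∑ t ∈ J, 1 / √(k t : ℝ)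
        + 2 * D₁ * ∑ t ∈ J, L * √T / (2 * γ (k t)) * √(Γsq (t + 1))
        + L * √T / 2 * ∑ t ∈ J, γ (k t)
      ≤ 2 * D * (L * √T) * (2 * √(k T)) + 2 * D * (L * √T * √(k T))
        + L * √T / 2 * (2 * (2 * D * √(k T))) := by
        refine add_le_add (add_le_add ?_ ?_) (mul_le_mul_of_nonneg_left hγ (by positivity))
        · exact mul_le_mul (mul_le_mul_of_nonneg_right hD₁ hLT.le)
            (run.sum_one_div_sqrt_k_le hJ hinj) (by positivity) (by positivity)
        · exact mul_le_mul hD₁ (run.sum_weight_mul_sqrt_Γsq_le hJ hinj)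
            (sum_nonneg fun t _ => mul_nonneg (run.weight_nonneg t) (Real.sqrt_nonneg _))
            (by positivity)
    _ = 8 * D * L * √T * √(k T) := by ring

end IsWarmupFreeAdaGradRun

theorem warmup_free_adagrad_regret_general
    {d : ℕ} {Θ : Set (EuclideanSpace ℝ (Fin d))}
    (hΘcv : Convex ℝ Θ)
    {f : EuclideanSpace ℝ (Fin d) → ℝ}
    {L : ℝ} (hL : 0 < L)
    {xstar : EuclideanSpace ℝ (Fin d)} (hxstarΘ : xstar ∈ Θ)
    (hmin : ∀ y ∈ Θ, f xstar ≤ f y)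
    (proj : EuclideanSpace ℝ (Fin d) → EuclideanSpace ℝ (Fin d))
    (hprojΘ : ∀ z, proj z ∈ Θ)
    (hproj : ∀ z, ∀ y ∈ Θ, ‖z - proj z‖ ≤ ‖z - y‖)
    {γ₀ : ℝ} (hγ₀ : 0 < γ₀)
    (γ : ℕ → ℝ) (hγ : ∀ j, γ j = γ₀ * 2 ^ j)
    (T : ℕ) (hT : 1 ≤ T)
    (x g : ℕ → EuclideanSpace ℝ (Fin d)) (k : ℕ → ℕ) (Γsq : ℕ → ℝ)
    (hx1Θ : x 1 ∈ Θ)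
    (hg : ∀ t, 1 ≤ t → ∀ y, f (x t) + ⟪g t, y - x t⟫ ≤ f y)
    (hgL : ∀ t, 1 ≤ t → ‖g t‖ ≤ L)
    (hk0 : k 0 = 1) (hΓ1 : Γsq 1 = 0)
    (xplus : ℕ → ℕ → EuclideanSpace ℝ (Fin d))
    (hxplus : ∀ t j, 1 ≤ t →
        xplus t j = proj (x t - (γ j / (L * Real.sqrt T)) • g t))
    (B : ℕ → ℕ → ℝ)
    (hB : ∀ t j, 1 ≤ t → B t j =
        2 * γ j / Real.sqrt j + Real.sqrt (Γsq t + γ j ^ 2 / T))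
    (hkmono : ∀ t, 1 ≤ t → k (t - 1) ≤ k t)
    (hksel : ∀ t, 1 ≤ t → ‖xplus t (k t) - x 1‖ ≤ B t (k t))
    (hkmin : ∀ t, 1 ≤ t → ∀ j, k (t - 1) ≤ j → j < k t →
        B t j < ‖xplus t j - x 1‖)
    (hxrec : ∀ t, 1 ≤ t → x (t + 1) = xplus t (k t))
    (hΓrec : ∀ t, 1 ≤ t → Γsq (t + 1) = Γsq t + γ (k t) ^ 2 / T) :
    ∑ t ∈ Finset.Icc 1 T, (f (x t) - f xstar)
      ≤ 10 * max ‖x 1 - xstar‖ γ₀ * L * Real.sqrt T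
          * Real.sqrt (2 * Real.logb 2 (2 * max ‖x 1 - xstar‖ γ₀ / γ₀)) := by
  have run : IsWarmupFreeAdaGradRun Θ f L proj γ₀ γ T x g k Γsq xplus B :=
    ⟨hΘcv, hprojΘ, hproj, hL, hγ₀, hγ, hT, hx1Θ, hg, hgL, hk0, hΓ1, hxplus, hB, hkmono, hksel,
      hkmin, hxrec, hΓrec⟩
  set W : ℕ → ℝ := fun t => L * √T / (2 * γ (k t))
  set J := {t ∈ Icc 1 T | t = T ∨ W (t + 1) ≠ W t}
  have hinj : Set.InjOn k J := run.monotone_k.injOn_of_lt_succ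
    (fun t ht => (mem_Icc.1 (mem_filter.1 ht).1).2) fun t ht htT =>
      (run.monotone_k (Nat.le_add_right t 1)).lt_of_ne fun hk =>
        (mem_filter.1 ht).2.resolve_left htT.ne (by simp only [W, hk])
  have hregret := sum_Icc_le_sum_filter_of_potential (r := fun t => f (x t) - f xstar) (W := W)
    (ψ := fun t => ‖x t - xstar‖ ^ 2 - Γsq t)
    (U := fun t => 2 * ‖x 1 - xstar‖ * (2 * γ (k t) / √(k t) + √(Γsq (t + 1))) + γ (k t) ^ 2)
    (fun t ht => run.regret_le hxstarΘ (mem_Icc.1 ht).1) (fun t _ => run.weight_nonneg t)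
    (fun t _ => run.weight_antitone (Nat.le_add_right t 1))
    (fun t ht => run.potential_gap_le (mem_Icc.1 ht).1 (mem_Icc.1 ht).2)
    (fun t _ => by have := run.γ_pos (k t); positivity)
  calc ∑ t ∈ Icc 1 T, (f (x t) - f xstar)
      ≤ 8 * max ‖x 1 - xstar‖ γ₀ * L * √T * √(k T) :=
        hregret.trans (run.sum_weight_mul_gap_le hxstarΘ hmin (filter_subset _ _) hinj)
    _ ≤ _ := by
        gcongr
        · norm_num
        · exact run.k_le_logb hxstarΘ hmin T

/-- warm-up Free AdaGrad with known horizon `T` and Lipschitz bound `L`. -/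
theorem warmup_free_adagrad_regret
    {d : ℕ} {Θ : Set (EuclideanSpace ℝ (Fin d))}
    (hΘne : Θ.Nonempty) (hΘcl : IsClosed Θ) (hΘcv : Convex ℝ Θ)
    {f : EuclideanSpace ℝ (Fin d) → ℝ}
    (hfconv : ConvexOn ℝ Set.univ f)
    {L : ℝ} (hL : 0 < L)
    {xstar : EuclideanSpace ℝ (Fin d)} (hxstarΘ : xstar ∈ Θ)
    (hmin : ∀ y ∈ Θ, f xstar ≤ f y)
    (proj : EuclideanSpace ℝ (Fin d) → EuclideanSpace ℝ (Fin d))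
    (hprojΘ : ∀ z, proj z ∈ Θ)
    (hproj : ∀ z, ∀ y ∈ Θ, ‖z - proj z‖ ≤ ‖z - y‖)
    {γ₀ : ℝ} (hγ₀ : 0 < γ₀)
    (γ : ℕ → ℝ) (hγ : ∀ j, γ j = γ₀ * 2 ^ j)
    (T : ℕ) (hT : 1 ≤ T)
    (x g : ℕ → EuclideanSpace ℝ (Fin d)) (k : ℕ → ℕ) (Γsq : ℕ → ℝ)
    (hx1Θ : x 1 ∈ Θ)
    (hg : ∀ t, 1 ≤ t → ∀ y, f (x t) + ⟪g t, y - x t⟫ ≤ f y)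
    (hgL : ∀ t, 1 ≤ t → ‖g t‖ ≤ L)
    (hk0 : k 0 = 1) (hΓ1 : Γsq 1 = 0)
    (xplus : ℕ → ℕ → EuclideanSpace ℝ (Fin d))
    (hxplus : ∀ t j, 1 ≤ t →
        xplus t j = proj (x t - (γ j / (L * Real.sqrt T)) • g t))
    (B : ℕ → ℕ → ℝ)
    (hB : ∀ t j, 1 ≤ t → B t j =
        2 * γ j / Real.sqrt j + Real.sqrt (Γsq t + γ j ^ 2 / T))
    (hkmono : ∀ t, 1 ≤ t → k (t - 1) ≤ k t)
    (hksel : ∀ t, 1 ≤ t → ‖xplus t (k t) - x 1‖ ≤ B t (k t))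
    (hkmin : ∀ t, 1 ≤ t → ∀ j, k (t - 1) ≤ j → j < k t →
        B t j < ‖xplus t j - x 1‖)
    (hxrec : ∀ t, 1 ≤ t → x (t + 1) = xplus t (k t))
    (hΓrec : ∀ t, 1 ≤ t → Γsq (t + 1) = Γsq t + γ (k t) ^ 2 / T) :
    ∑ t ∈ Finset.Icc 1 T, (f (x t) - f xstar)
      ≤ 10 * max ‖x 1 - xstar‖ γ₀ * L * Real.sqrt T
          * Real.sqrt (2 * Real.logb 2 (2 * max ‖x 1 - xstar‖ γ₀ / γ₀)) :=
  warmup_free_adagrad_regret_general hΘcv hL hxstarΘ hmin proj hprojΘ hproj hγ₀ γ hγ T hT x g k Γsq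
    hx1Θ hg hgL hk0 hΓ1 xplus hxplus B hB hkmono hksel hkmin hxrec hΓrec
end

section
/- With D_{γ₀} = max(‖x₁ − x*‖, γ₀), the simple doubling variant of projected gradient descent satisfies Σ_{t=1}^T (f(x_t) − f(x*)) ≤ 3·‖x₁ − x*‖·L·√T·log₂(2·D_{γ₀}/γ₀) + 2·D_{γ₀}·L·√T. -/
/-!
Let `D = ‖x₁ - x*‖`. A projected subgradient step with step size `η = γ / (L √T)` satisfies
`‖x⁺ - x*‖² ≤ ‖x - x*‖² - 2 η (f x - f x*) + γ² / T`. Hence, as long as the step sizes stay below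
`γ_j`, every candidate of the first `T` rounds lies within `√(D² + γ_j²)` of `x*`, so within `3 γ_j`
of `x₁` once `γ_j > D`: such a candidate is always accepted, the step sizes never exceed
`2 D_{γ₀}`, and the final index `k_T` is at most `log₂ (2 D_{γ₀} / γ₀)`.

Summing the descent inequalities by parts against the nondecreasing step sizes `γ_{k_t}`, each
doubling costs at most `3 D L √T / 2`: accepted iterates stay within `3 γ_{k_t}` of `x₁`, so
`‖x₁ - x*‖² - ‖x_{t+1} - x*‖² ≤ 6 γ_{k_t} D`.
-/

open scoped RealInnerProductSpace
open Finset

section InnerProduct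

variable {E : Type*} [NormedAddCommGroup E] [InnerProductSpace ℝ E]

theorem Convex.norm_sub_le_of_isMinOn {K : Set E} (hK : Convex ℝ K) {z p : E} (hp : p ∈ K)
    (hmin : IsMinOn (fun y => ‖z - y‖) K p) {y : E} (hy : y ∈ K) : ‖p - y‖ ≤ ‖z - y‖ := by
  have hinner : ⟪z - p, y - p⟫ ≤ 0 :=
    (norm_eq_iInf_iff_real_inner_le_zero hK hp).1 (hmin.iInf_eq hp).symm y hy
  have hsq : ‖z - y‖ ^ 2 = ‖z - p‖ ^ 2 - 2 * ⟪z - p, y - p⟫ + ‖y - p‖ ^ 2 := by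
    rw [← norm_sub_sq_real, sub_sub_sub_cancel_right]
  rw [norm_sub_rev]
  nlinarith [norm_nonneg (y - p), norm_nonneg (z - y), sq_nonneg ‖z - p‖]

theorem sq_norm_sub_le_of_subgradient_step {f : E → ℝ} {x y p g : E} {η L : ℝ} (hη : 0 ≤ η)
    (hg : f x + ⟪g, y - x⟫ ≤ f y) (hgL : ‖g‖ ≤ L) (hp : ‖p - y‖ ≤ ‖x - η • g - y‖) :
    ‖p - y‖ ^ 2 ≤ ‖x - y‖ ^ 2 - 2 * η * (f x - f y) + (η * L) ^ 2 := by
  have hsq : ‖x - η • g - y‖ ^ 2 = ‖x - y‖ ^ 2 - 2 * η * ⟪g, x - y⟫ + η ^ 2 * ‖g‖ ^ 2 := by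
    rw [sub_right_comm, norm_sub_sq_real, real_inner_smul_right, real_inner_comm, norm_smul,
      Real.norm_of_nonneg hη]
    ring
  have hsub : f x - f y ≤ ⟪g, x - y⟫ := by
    rw [← neg_sub x y, inner_neg_right] at hg
    linarith
  have hgL2 : η ^ 2 * ‖g‖ ^ 2 ≤ (η * L) ^ 2 := by
    rw [mul_pow]; gcongr
  have hp2 := pow_le_pow_left₀ (norm_nonneg _) hp 2
  nlinarith

theorem sq_norm_sub_le_add_of_subgradient_step {f : E → ℝ} {x y p g : E} {η L : ℝ} (hη : 0 ≤ η)
    (hyx : f y ≤ f x) (hg : f x + ⟪g, y - x⟫ ≤ f y) (hgL : ‖g‖ ≤ L)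
    (hp : ‖p - y‖ ≤ ‖x - η • g - y‖) : ‖p - y‖ ^ 2 ≤ ‖x - y‖ ^ 2 + (η * L) ^ 2 := by
  nlinarith [sq_norm_sub_le_of_subgradient_step hη hg hgL hp]

theorem sub_le_of_subgradient_step {f : E → ℝ} {x y p g : E} {η L : ℝ} (hη : 0 < η)
    (hg : f x + ⟪g, y - x⟫ ≤ f y) (hgL : ‖g‖ ≤ L) (hp : ‖p - y‖ ≤ ‖x - η • g - y‖) :
    f x - f y ≤ (‖x - y‖ ^ 2 - ‖p - y‖ ^ 2) / (2 * η) + η * L ^ 2 / 2 := by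
  have hdesc := sq_norm_sub_le_of_subgradient_step hη.le hg hgL hp
  rw [div_add_div _ _ (by positivity) two_ne_zero, le_div_iff₀ (by positivity)]
  nlinarith

end InnerProduct

theorem sq_norm_sub_sub_sq_norm_sub_le {E : Type*} [SeminormedAddCommGroup E] (u v w : E) :
    ‖u - w‖ ^ 2 - ‖v - w‖ ^ 2 ≤ 2 * ‖u - v‖ * ‖u - w‖ := by
  have htri : ‖u - w‖ ≤ ‖u - v‖ + ‖v - w‖ := norm_sub_le_norm_sub_add_norm_sub u v w
  rcases le_total ‖u - w‖ ‖v - w‖ with hle | hle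
  · nlinarith [norm_nonneg (u - v), norm_nonneg (u - w)]
  · nlinarith [norm_nonneg (u - v), norm_nonneg (v - w)]

theorem doubling_stepsize_le {E : Type*} [SeminormedAddCommGroup E] {x : ℕ → E}
    {xplus : ℕ → ℕ → E} {y : E} {k : ℕ → ℕ} {γ₀ : ℝ} {T : ℕ} (hγ₀ : 0 ≤ γ₀) (hk0 : k 0 = 1)
    (hk : Monotone k) (hxrec : ∀ t, 1 ≤ t → x (t + 1) = xplus t (k t))
    (hfar : ∀ t j, 1 ≤ t → ‖xplus t j - y‖ ^ 2 ≤ ‖x t - y‖ ^ 2 + (γ₀ * 2 ^ j) ^ 2 / T)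
    (hkmin : ∀ t, 1 ≤ t → ∀ j, k (t - 1) ≤ j → j < k t → 3 * (γ₀ * 2 ^ j) < ‖xplus t j - x 1‖) :
    ∀ t ≤ T, γ₀ * 2 ^ k t ≤ 2 * max ‖x 1 - y‖ γ₀ := by
  set D := ‖x 1 - y‖
  have hγ_mono {i j : ℕ} (h : i ≤ j) : γ₀ * 2 ^ i ≤ γ₀ * 2 ^ j := by
    gcongr; norm_num
  have hdist (n : ℕ) : ‖x (n + 1) - y‖ ^ 2 ≤ D ^ 2 + n * (γ₀ * 2 ^ k n) ^ 2 / T := by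
    induction n with
    | zero => simp [D]
    | succ n ih =>
      have hnext := hfar (n + 1) (k (n + 1)) n.succ_pos
      have hstep : n * (γ₀ * 2 ^ k n) ^ 2 / T ≤ n * (γ₀ * 2 ^ k (n + 1)) ^ 2 / T := by
        gcongr (n : ℝ) * ?_ ^ 2 / _
        exact hγ_mono (hk n.le_succ)
      rw [hxrec (n + 1) n.succ_pos]
      push_cast
      rw [add_mul, one_mul, add_div]
      linarith
  have hrej (n : ℕ) (hn : n < T) (j : ℕ) (hj : k n ≤ j) (hj' : j < k (n + 1)) :
      γ₀ * 2 ^ j ≤ D := by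
    have hnT : (n + 1 : ℝ) ≤ T := by exact_mod_cast hn
    have hγj := hγ_mono hj
    have hclose : ‖xplus (n + 1) j - y‖ ^ 2 ≤ D ^ 2 + (γ₀ * 2 ^ j) ^ 2 := by
      calc ‖xplus (n + 1) j - y‖ ^ 2
          ≤ D ^ 2 + n * (γ₀ * 2 ^ k n) ^ 2 / T + (γ₀ * 2 ^ j) ^ 2 / T := by
            linarith [hfar (n + 1) j n.succ_pos, hdist n]
        _ ≤ D ^ 2 + (n + 1) * (γ₀ * 2 ^ j) ^ 2 / T := by
            rw [add_assoc, add_mul, one_mul, add_div]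
            gcongr
        _ ≤ D ^ 2 + (γ₀ * 2 ^ j) ^ 2 := by
            rw [mul_div_right_comm]
            gcongr
            exact mul_le_of_le_one_left (by positivity) ((div_le_one (by linarith)).2 hnT)
    have hreject : 3 * (γ₀ * 2 ^ j) < ‖xplus (n + 1) j - y‖ + D := by
      refine (hkmin (n + 1) n.succ_pos j (by simpa using hj) hj').trans_le ?_
      exact (norm_sub_le_norm_sub_add_norm_sub _ y _).trans_eq (by rw [norm_sub_rev y])
    by_contra! h
    nlinarith [norm_nonneg (xplus (n + 1) j - y), norm_nonneg (x 1 - y)]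
  intro t ht
  induction t with
  | zero => rw [hk0]; linarith [le_max_right D γ₀]
  | succ n ih =>
    have hkn : k n ≤ k (n + 1) := hk n.le_succ
    rcases hkn.eq_or_lt with heq | hlt
    · rw [← heq]; exact ih (by omega)
    · obtain ⟨j, hj⟩ : ∃ j, k (n + 1) = j + 1 := ⟨k (n + 1) - 1, by omega⟩
      have hjD := hrej n (by omega) j (by omega) (by omega)
      calc γ₀ * 2 ^ k (n + 1) = 2 * (γ₀ * 2 ^ j) := by rw [hj, pow_succ]; ring
        _ ≤ 2 * max D γ₀ := by linarith [le_max_left D γ₀]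

theorem one_sub_two_pow_div_two_pow_le {m n : ℕ} (h : m ≤ n) :
    1 - (2 : ℝ) ^ m / 2 ^ n ≤ ((n : ℝ) - m) / 2 := by
  have hdiv : (2 : ℝ) ^ m / 2 ^ n = (1 + (-1 / 2)) ^ (n - m) := by
    rw [← Nat.sub_add_cancel h, pow_add, div_mul_cancel_right₀ (by positivity)]
    norm_num
    rw [one_div, inv_pow]
  have hbernoulli := one_add_mul_le_pow (a := (-1 / 2 : ℝ)) (by norm_num) (n - m)
  rw [Nat.cast_sub h] at hbernoulli
  linarith

theorem sum_sub_div_le_of_monotone {a w : ℕ → ℝ} {C : ℝ} (hw : ∀ t, 0 < w t)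
    (hmono : Monotone w) (ha : ∀ t, 1 ≤ t → a 1 - C * w t ≤ a (t + 1)) {n : ℕ} (hn : 1 ≤ n) :
    ∑ t ∈ Icc 1 n, (a t - a (t + 1)) / w t ≤ C * (1 + ∑ t ∈ Ico 1 n, (1 - w t / w (t + 1))) := by
  have key : ∑ t ∈ Icc 1 n, (a t - a (t + 1)) / w t
      ≤ (a 1 - a (n + 1)) / w n + C * ∑ t ∈ Ico 1 n, (1 - w t / w (t + 1)) := by
    induction n, hn using Nat.le_induction with
    | base => simp
    | succ n hn ih =>
      have hwn := hw n
      have hdiff : 0 ≤ 1 / w n - 1 / w (n + 1) :=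
        sub_nonneg.2 (one_div_le_one_div_of_le hwn (hmono n.le_succ))
      have hstep : (a 1 - a (n + 1)) * (1 / w n - 1 / w (n + 1))
          ≤ C * w n * (1 / w n - 1 / w (n + 1)) :=
        mul_le_mul_of_nonneg_right (by linarith [ha n hn]) hdiff
      have hC : C * w n * (1 / w n - 1 / w (n + 1)) = C * (1 - w n / w (n + 1)) := by
        field_simp
      have hparts : (a 1 - a (n + 1)) / w n + (a (n + 1) - a (n + 1 + 1)) / w (n + 1)
          = (a 1 - a (n + 1 + 1)) / w (n + 1) + (a 1 - a (n + 1)) * (1 / w n - 1 / w (n + 1)) := by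
        ring
      rw [sum_Icc_succ_top (by omega), sum_Ico_succ_top hn, mul_add]
      linarith
  have hlast : (a 1 - a (n + 1)) / w n ≤ C := by
    rw [div_le_iff₀ (hw n)]; linarith [ha n hn]
  linarith

theorem sum_Ico_one_sub_two_pow_div_le {k : ℕ → ℕ} (hk : Monotone k) {m n : ℕ} (h : m ≤ n) :
    ∑ t ∈ Ico m n, (1 - (2 : ℝ) ^ k t / 2 ^ k (t + 1)) ≤ ((k n : ℝ) - k m) / 2 :=
  calc _ ≤ ∑ t ∈ Ico m n, (((k (t + 1) : ℝ) - k t) / 2) :=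
        sum_le_sum fun t _ => one_sub_two_pow_div_two_pow_le (hk t.le_succ)
    _ = _ := by rw [← sum_div, sum_Ico_sub (fun t => (k t : ℝ)) h]

theorem sum_le_of_doubling_stepsizes {r a : ℕ → ℝ} {k : ℕ → ℕ} {γ₀ D L s : ℝ} {T : ℕ}
    (hT : 1 ≤ T) (hk : Monotone k) (hk1 : 1 ≤ k 1) (hγ₀ : 0 < γ₀) (hD : 0 ≤ D) (hL : 0 ≤ L)
    (hs : 0 < s) (hsT : s ^ 2 = T)
    (hr : ∀ t, 1 ≤ t →
      r t ≤ L * s / 2 * ((a t - a (t + 1)) / (γ₀ * 2 ^ k t)) + L / (2 * s) * (γ₀ * 2 ^ k t))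
    (ha : ∀ t, 1 ≤ t → a 1 - 6 * D * (γ₀ * 2 ^ k t) ≤ a (t + 1))
    (hB : ∀ t ≤ T, γ₀ * 2 ^ k t ≤ 2 * max D γ₀) :
    ∑ t ∈ Icc 1 T, r t
      ≤ 3 * D * L * s * Real.logb 2 (2 * max D γ₀ / γ₀) + 2 * max D γ₀ * L * s := by
  set Λ := Real.logb 2 (2 * max D γ₀ / γ₀)
  have hkT : (k T : ℝ) ≤ Λ := by
    rw [Real.le_logb_iff_rpow_le one_lt_two (by positivity), Real.rpow_natCast, le_div_iff₀ hγ₀,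
      mul_comm]
    exact hB T le_rfl
  have hk1' : (1 : ℝ) ≤ k 1 := by exact_mod_cast hk1
  have htel := sum_sub_div_le_of_monotone (a := a) (fun t => by positivity)
    (fun _ _ h => by gcongr; exacts [one_le_two, hk h]) ha hT
  have hdbl := sum_Ico_one_sub_two_pow_div_le hk hT
  simp only [mul_div_mul_left _ _ hγ₀.ne'] at htel
  have hpow : ∑ t ∈ Icc 1 T, γ₀ * 2 ^ k t ≤ T * (2 * max D γ₀) :=
    (sum_le_sum fun t ht => hB t (mem_Icc.1 ht).2).trans_eq (by simp)
  calc ∑ t ∈ Icc 1 T, r t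
      ≤ ∑ t ∈ Icc 1 T, (L * s / 2 * ((a t - a (t + 1)) / (γ₀ * 2 ^ k t))
          + L / (2 * s) * (γ₀ * 2 ^ k t)) :=
        sum_le_sum fun t ht => hr t (mem_Icc.1 ht).1
    _ = L * s / 2 * ∑ t ∈ Icc 1 T, (a t - a (t + 1)) / (γ₀ * 2 ^ k t)
          + L / (2 * s) * ∑ t ∈ Icc 1 T, γ₀ * 2 ^ k t := by
        rw [sum_add_distrib, mul_sum, mul_sum]
    _ ≤ L * s / 2 * (6 * D * (1 + ((k T : ℝ) - k 1) / 2)) + L / (2 * s) * (T * (2 * max D γ₀)) := by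
        gcongr
        exact htel.trans (by gcongr)
    _ = 3 * D * L * s * (1 + ((k T : ℝ) - k 1) / 2) + max D γ₀ * L * s := by
        rw [← hsT]; field_simp; ring
    _ ≤ 3 * D * L * s * Λ + 2 * max D γ₀ * L * s := by
        have hDLs : 0 ≤ max D γ₀ * L * s := by positivity
        gcongr 3 * D * L * s * ?_ + ?_
        · linarith [(Nat.one_le_cast.2 (hk1.trans (hk hT)) : (1 : ℝ) ≤ k T)]
        · linarith

theorem simple_doubling_pgd_regret_general
    {d : ℕ} {Θ : Set (EuclideanSpace ℝ (Fin d))}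
    (hΘcv : Convex ℝ Θ)
    {f : EuclideanSpace ℝ (Fin d) → ℝ}
    {L : ℝ} (hL : 0 < L)
    {xstar : EuclideanSpace ℝ (Fin d)} (hxstarΘ : xstar ∈ Θ)
    (hmin : ∀ y ∈ Θ, f xstar ≤ f y)
    (proj : EuclideanSpace ℝ (Fin d) → EuclideanSpace ℝ (Fin d))
    (hprojΘ : ∀ z, proj z ∈ Θ)
    (hproj : ∀ z, ∀ y ∈ Θ, ‖z - proj z‖ ≤ ‖z - y‖)
    {γ₀ : ℝ} (hγ₀ : 0 < γ₀)
    (γ : ℕ → ℝ) (hγ : ∀ j, γ j = γ₀ * 2 ^ j)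
    (T : ℕ) (hT : 1 ≤ T)
    (x g : ℕ → EuclideanSpace ℝ (Fin d)) (k : ℕ → ℕ)
    (hx1Θ : x 1 ∈ Θ)
    (hg : ∀ t, 1 ≤ t → ∀ y, f (x t) + ⟪g t, y - x t⟫ ≤ f y)
    (hgL : ∀ t, 1 ≤ t → ‖g t‖ ≤ L)
    (hk0 : k 0 = 1)
    (xplus : ℕ → ℕ → EuclideanSpace ℝ (Fin d))
    (hxplus : ∀ t j, 1 ≤ t →
        xplus t j = proj (x t - (γ j / (L * Real.sqrt T)) • g t))
    (hkmono : ∀ t, 1 ≤ t → k (t - 1) ≤ k t)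
    (hksel : ∀ t, 1 ≤ t → ‖xplus t (k t) - x 1‖ ≤ 3 * γ (k t))
    (hkmin : ∀ t, 1 ≤ t → ∀ j, k (t - 1) ≤ j → j < k t →
        3 * γ j < ‖xplus t j - x 1‖)
    (hxrec : ∀ t, 1 ≤ t → x (t + 1) = xplus t (k t)) :
    ∑ t ∈ Finset.Icc 1 T, (f (x t) - f xstar)
      ≤ 3 * ‖x 1 - xstar‖ * L * Real.sqrt T
            * Real.logb 2 (2 * max ‖x 1 - xstar‖ γ₀ / γ₀)
          + 2 * max ‖x 1 - xstar‖ γ₀ * L * Real.sqrt T := by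
  obtain rfl : γ = fun j => γ₀ * 2 ^ j := funext hγ
  set s := √(T : ℝ)
  have hs : 0 < s := Real.sqrt_pos.2 (by exact_mod_cast hT)
  have hsT : s ^ 2 = T := Real.sq_sqrt (Nat.cast_nonneg T)
  have hk : Monotone k := monotone_nat_of_le_succ fun n => hkmono (n + 1) n.succ_pos
  have hmem : ∀ t, 1 ≤ t → x t ∈ Θ := by
    rintro (_ | _ | t) ht
    · omega
    · exact hx1Θ
    · rw [hxrec _ (by omega), hxplus _ _ (by omega)]; exact hprojΘ _
  have hclose : ∀ t j, 1 ≤ t →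
      ‖xplus t j - xstar‖ ≤ ‖x t - (γ₀ * 2 ^ j / (L * s)) • g t - xstar‖ := fun t j ht =>
    hxplus t j ht ▸ hΘcv.norm_sub_le_of_isMinOn (hprojΘ _) (fun y hy => hproj _ y hy) hxstarΘ
  have hfar : ∀ t j, 1 ≤ t →
      ‖xplus t j - xstar‖ ^ 2 ≤ ‖x t - xstar‖ ^ 2 + (γ₀ * 2 ^ j) ^ 2 / T := fun t j ht =>
    (sq_norm_sub_le_add_of_subgradient_step (by positivity) (hmin _ (hmem t ht)) (hg t ht xstar)
      (hgL t ht) (hclose t j ht)).trans_eq (by rw [← hsT]; field_simp)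
  have hregret : ∀ t, 1 ≤ t → f (x t) - f xstar ≤ L * s / 2 *
      ((‖x t - xstar‖ ^ 2 - ‖x (t + 1) - xstar‖ ^ 2) / (γ₀ * 2 ^ k t))
        + L / (2 * s) * (γ₀ * 2 ^ k t) := by
    intro t ht
    rw [hxrec t ht]
    refine (sub_le_of_subgradient_step (by positivity) (hg t ht xstar) (hgL t ht)
      (hclose t (k t) ht)).trans_eq ?_
    field_simp
  have hgap : ∀ t, 1 ≤ t →
      ‖x 1 - xstar‖ ^ 2 - 6 * ‖x 1 - xstar‖ * (γ₀ * 2 ^ k t) ≤ ‖x (t + 1) - xstar‖ ^ 2 := by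
    intro t ht
    have hstay : ‖x 1 - x (t + 1)‖ ≤ 3 * (γ₀ * 2 ^ k t) := by
      rw [norm_sub_rev, hxrec t ht]; exact hksel t ht
    nlinarith [sq_norm_sub_sub_sq_norm_sub_le (x 1) (x (t + 1)) xstar, norm_nonneg (x 1 - xstar)]
  exact sum_le_of_doubling_stepsizes hT hk (by simpa [hk0] using hk (Nat.zero_le 1)) hγ₀
    (norm_nonneg _) hL.le hs hsT hregret hgap (doubling_stepsize_le hγ₀.le hk0 hk hxrec hfar hkmin)

/-- simple doubling variant of projected gradient descent. -/
theorem simple_doubling_pgd_regret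
    {d : ℕ} {Θ : Set (EuclideanSpace ℝ (Fin d))}
    (hΘne : Θ.Nonempty) (hΘcl : IsClosed Θ) (hΘcv : Convex ℝ Θ)
    {f : EuclideanSpace ℝ (Fin d) → ℝ}
    (hfconv : ConvexOn ℝ Set.univ f)
    {L : ℝ} (hL : 0 < L)
    {xstar : EuclideanSpace ℝ (Fin d)} (hxstarΘ : xstar ∈ Θ)
    (hmin : ∀ y ∈ Θ, f xstar ≤ f y)
    (proj : EuclideanSpace ℝ (Fin d) → EuclideanSpace ℝ (Fin d))
    (hprojΘ : ∀ z, proj z ∈ Θ)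
    (hproj : ∀ z, ∀ y ∈ Θ, ‖z - proj z‖ ≤ ‖z - y‖)
    {γ₀ : ℝ} (hγ₀ : 0 < γ₀)
    (γ : ℕ → ℝ) (hγ : ∀ j, γ j = γ₀ * 2 ^ j)
    (T : ℕ) (hT : 1 ≤ T)
    (x g : ℕ → EuclideanSpace ℝ (Fin d)) (k : ℕ → ℕ)
    (hx1Θ : x 1 ∈ Θ)
    (hg : ∀ t, 1 ≤ t → ∀ y, f (x t) + ⟪g t, y - x t⟫ ≤ f y)
    (hgL : ∀ t, 1 ≤ t → ‖g t‖ ≤ L)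
    (hk0 : k 0 = 1)
    (xplus : ℕ → ℕ → EuclideanSpace ℝ (Fin d))
    (hxplus : ∀ t j, 1 ≤ t →
        xplus t j = proj (x t - (γ j / (L * Real.sqrt T)) • g t))
    (hkmono : ∀ t, 1 ≤ t → k (t - 1) ≤ k t)
    (hksel : ∀ t, 1 ≤ t → ‖xplus t (k t) - x 1‖ ≤ 3 * γ (k t))
    (hkmin : ∀ t, 1 ≤ t → ∀ j, k (t - 1) ≤ j → j < k t →
        3 * γ j < ‖xplus t j - x 1‖)
    (hxrec : ∀ t, 1 ≤ t → x (t + 1) = xplus t (k t)) :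
    ∑ t ∈ Finset.Icc 1 T, (f (x t) - f xstar)
      ≤ 3 * ‖x 1 - xstar‖ * L * Real.sqrt T
            * Real.logb 2 (2 * max ‖x 1 - xstar‖ γ₀ / γ₀)
          + 2 * max ‖x 1 - xstar‖ γ₀ * L * Real.sqrt T :=
  simple_doubling_pgd_regret_general hΘcv hL hxstarΘ hmin proj hprojΘ hproj hγ₀ γ hγ T hT x g k hx1Θ
    hg hgL hk0 xplus hxplus hkmono hksel hkmin hxrec
end

section
/- Let (a_t)_{t≥1} be a non-negative real sequence, S_t = Σ_{τ=1}^t a_τ, and ε > 0. Then for every integer T ≥ 1: Σ_{t=1}^T a_t / (ε + S_t) ≤ log(1 + S_T/ε). -/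
/-!
With `b t = ε + S t`, each term is `(b t - b (t - 1)) / b t`, which is at most
`log b t - log b (t - 1)` because `1 - z⁻¹ ≤ log z` for `z = b t / b (t - 1)`.
The sum telescopes to `log (ε + S T) - log ε = log (1 + S T / ε)`.
-/

open Finset Real

lemma sub_div_le_log_sub_log {x y : ℝ} (hx : 0 < x) (hy : 0 < y) :
    (x - y) / x ≤ log x - log y := by
  have h := one_sub_inv_le_log_of_pos (div_pos hx hy)
  rw [log_div hx.ne' hy.ne', inv_div] at h
  rwa [sub_div, div_self hx.ne']

lemma sum_Icc_sub_div_le_log_sub_log {b : ℕ → ℝ} (hb : ∀ t, 0 < b t) (T : ℕ) :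
    ∑ t ∈ Icc 1 T, (b t - b (t - 1)) / b t ≤ log (b T) - log (b 0) := by
  induction T with
  | zero => simp
  | succ n ih =>
    rw [sum_Icc_succ_top (by omega), Nat.add_sub_cancel]
    linarith [sub_div_le_log_sub_log (hb (n + 1)) (hb n)]

theorem sum_div_eps_partial_sum_general (a : ℕ → ℝ) (ha : ∀ t, 0 ≤ a t)
    (S : ℕ → ℝ) (hS : ∀ t, S t = ∑ τ ∈ Finset.Icc 1 t, a τ)
    {ε : ℝ} (hε : 0 < ε)
    (T : ℕ) :
    ∑ t ∈ Finset.Icc 1 T, a t / (ε + S t) ≤ Real.log (1 + S T / ε) := by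
  have hS_nonneg (t : ℕ) : 0 ≤ S t := hS t ▸ sum_nonneg fun τ _ => ha τ
  have hS_zero : S 0 = 0 := by simp [hS]
  have hS_succ (t : ℕ) : S (t + 1) = S t + a (t + 1) := by
    rw [hS, hS, sum_Icc_succ_top (by omega)]
  have hterm : ∀ t ∈ Icc 1 T,
      a t / (ε + S t) = ((ε + S t) - (ε + S (t - 1))) / (ε + S t) := by
    intro t ht
    obtain ⟨n, rfl⟩ := Nat.exists_eq_add_of_le' (mem_Icc.mp ht).1
    rw [Nat.add_sub_cancel, hS_succ]
    ring_nf
  have hlog : log (1 + S T / ε) = log (ε + S T) - log (ε + S 0) := by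
    rw [hS_zero, add_zero, ← log_div (by linarith [hS_nonneg T]) hε.ne',
      add_div, div_self hε.ne']
  rw [sum_congr rfl hterm, hlog]
  exact sum_Icc_sub_div_le_log_sub_log (fun t => by linarith [hS_nonneg t]) T

/-- `∑ a_t / (ε + S_t) ≤ log (1 + S_T / ε)`. -/
theorem sum_div_eps_partial_sum (a : ℕ → ℝ) (ha : ∀ t, 0 ≤ a t)
    (S : ℕ → ℝ) (hS : ∀ t, S t = ∑ τ ∈ Finset.Icc 1 t, a τ)
    {ε : ℝ} (hε : 0 < ε)
    (T : ℕ) (hT : 1 ≤ T) :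
    ∑ t ∈ Finset.Icc 1 T, a t / (ε + S t) ≤ Real.log (1 + S T / ε) :=
  sum_div_eps_partial_sum_general a ha S hS hε T
end
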